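/- arXiv:1810.05802 — 4 statements merged into one kernel-verified Lean document; each statement's English description precedes it below -/
import Mathlib

section
/- Let G be a C_{4k}-free bipartite graph, M a maximum matching of G, and v an M-unsaturated vertex. Let R_e(v,M) be the set of vertices reachable from v by an M-alternating path of even length, and R_o(v,M) the set reachable by an M-alternating path of odd length. Then: (1) R_e(v,M) ∩ R_o(v,M) = ∅, (2) no vertex of R_o(v,M) is M-unsaturated, (3) |R_e(v,M)| = |R_o(v,M)| + 1, (4) the neighborhood of R_e(v,M) is contained in R_o(v,M), and (5) R_e(v,M) and R_o(v,M) are independent sets of G. -/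
open scoped Classical
set_option linter.unusedSectionVars false
set_option linter.unusedVariables false
set_option linter.deprecated false

namespace C4kPaper

open SimpleGraph

variable {V : Type*} [Fintype V] [DecidableEq V]

/-- The null space of the adjacency matrix of `G`, as a set of vectors. -/
noncomputable def nullSet (G : SimpleGraph V) : Set (V → ℝ) :=
  {x | Matrix.mulVec (G.adjMatrix ℝ) x = 0}

/-- The null space of the adjacency matrix of `G`, as a submodule of `ℝ^V`. -/
noncomputable def nullModule (G : SimpleGraph V) : Submodule ℝ (V → ℝ) :=
  LinearMap.ker (G.adjMatrix ℝ).mulVecLin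

/-- The nullity of `G`: the dimension of the null space of its adjacency matrix. -/
noncomputable def nullity (G : SimpleGraph V) : ℕ :=
  Module.finrank ℝ (nullModule G)

/-- The rank of the adjacency matrix of `G` over `ℝ`. -/
noncomputable def rk (G : SimpleGraph V) : ℕ :=
  (G.adjMatrix ℝ).rank

/-- The support of `G`: vertices where some null space vector is nonzero. -/
def supp (G : SimpleGraph V) : Set V :=
  {v | ∃ x ∈ nullSet G, x v ≠ 0}

/-- The core of `G`: the neighbors of the support. -/
def core (G : SimpleGraph V) : Set V :=
  {u | ∃ v ∈ supp G, G.Adj u v}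

/-- The N-part of `G`: vertices neither in the support nor in the core. -/
def npart (G : SimpleGraph V) : Set V :=
  (supp G ∪ core G)ᶜ

/-- `G` is bipartite. -/
def IsBipartite (G : SimpleGraph V) : Prop :=
  ∃ s : Set V, ∀ ⦃u v : V⦄, G.Adj u v → (u ∈ s ↔ v ∉ s)

/-- `G` has no cycle whose length is a multiple of 4. -/
def C4kFree (G : SimpleGraph V) : Prop :=
  ∀ (v : V) (c : G.Walk v v), c.IsCycle → ¬ (4 ∣ c.length)

/-- `M` is a maximum matching of `G`. -/
def IsMaximumMatching (G : SimpleGraph V) (M : G.Subgraph) : Prop :=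
  M.IsMatching ∧ ∀ M' : G.Subgraph, M'.IsMatching → M'.edgeSet.ncard ≤ M.edgeSet.ncard

/-- The matching number of `G`. -/
noncomputable def matchNum (G : SimpleGraph V) : ℕ :=
  sSup {n | ∃ M : G.Subgraph, M.IsMatching ∧ M.edgeSet.ncard = n}

/-- `s` is an independent set of `G`. -/
def IsIndep (G : SimpleGraph V) (s : Set V) : Prop :=
  ∀ ⦃u⦄, u ∈ s → ∀ ⦃w⦄, w ∈ s → ¬ G.Adj u w

/-- `s` is a maximum independent set of `G`. -/
def IsMaxIndep (G : SimpleGraph V) (s : Set V) : Prop :=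
  IsIndep G s ∧ ∀ t : Set V, IsIndep G t → t.ncard ≤ s.ncard

/-- The independence number of `G`. -/
noncomputable def indepNum (G : SimpleGraph V) : ℕ :=
  sSup {n | ∃ s : Set V, IsIndep G s ∧ s.ncard = n}

/-- An `(M,x)`-alternating walk `w₀, w₁, …, w_j` (here `w_i = p.getVert i`):
for all `0 ≤ i < ⌊(j-1)/2⌋`, `{w_{2i}, w_{2i+1}} ∈ M` and `x_{w_{2i}} · x_{w_{2i+2}} < 0`. -/
def MxAltWalk (G : SimpleGraph V) (M : G.Subgraph) (x : V → ℝ) {v u : V}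
    (p : G.Walk v u) : Prop :=
  ∀ i : ℕ, i < (p.length - 1) / 2 →
    M.Adj (p.getVert (2 * i)) (p.getVert (2 * i + 1)) ∧
      x (p.getVert (2 * i)) * x (p.getVert (2 * i + 2)) < 0

/-- A maximal `(M,x)`-alternating walk: one not properly contained in a longer
`(M,x)`-alternating walk from the same start. -/
def MaximalMxAltWalk (G : SimpleGraph V) (M : G.Subgraph) (x : V → ℝ) {v u : V}
    (p : G.Walk v u) : Prop :=
  MxAltWalk G M x p ∧
    ∀ (u' : V) (q : G.Walk v u'), MxAltWalk G M x q → p.support <+: q.support →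
      q.length = p.length

/-- An `M`-alternating walk starting with an edge not in `M`:
the `i`-th edge belongs to `M` iff `i` is odd. -/
def MAltWalk (G : SimpleGraph V) (M : G.Subgraph) {v u : V} (p : G.Walk v u) : Prop :=
  ∀ i : ℕ, i < p.length → (M.Adj (p.getVert i) (p.getVert (i + 1)) ↔ Odd i)

/-- Vertices reachable from `v` by an even-length `M`-alternating path. -/
def Re (G : SimpleGraph V) (M : G.Subgraph) (v : V) : Set V :=
  {u | ∃ p : G.Walk v u, p.IsPath ∧ MAltWalk G M p ∧ Even p.length}

/-- Vertices reachable from `v` by an odd-length `M`-alternating path. -/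
def Ro (G : SimpleGraph V) (M : G.Subgraph) (v : V) : Set V :=
  {u | ∃ p : G.Walk v u, p.IsPath ∧ MAltWalk G M p ∧ Odd p.length}



section Aux

variable {G : SimpleGraph V} {M : G.Subgraph}

private lemma walk_parity {s : Set V} (hs : ∀ ⦃u v : V⦄, G.Adj u v → (u ∈ s ↔ v ∉ s))
    {a b : V} (p : G.Walk a b) : ((a ∈ s) ↔ (b ∈ s)) ↔ Even p.length := by
  induction p with
  | nil => simp
  | cons h q ih =>
    have h1 := hs h
    simp only [Walk.length_cons, Nat.even_add_one, ← ih]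
    tauto

private lemma walks_same_parity {s : Set V}
    (hs : ∀ ⦃u v : V⦄, G.Adj u v → (u ∈ s ↔ v ∉ s))
    {a b : V} (p q : G.Walk a b) : Even p.length ↔ Even q.length := by
  rw [← walk_parity hs p, ← walk_parity hs q]

private lemma path_getVert_inj {a b : V} {p : G.Walk a b} (hp : p.IsPath) :
    ∀ i, i ≤ p.length → ∀ j, j ≤ p.length → p.getVert i = p.getVert j → i = j := by
  induction p with
  | nil => intro i hi j hj _; simp only [Walk.length_nil, Nat.le_zero] at hi hj; omega
  | @cons x y z h q ih =>
    rw [Walk.cons_isPath_iff] at hp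
    have hmem : ∀ k, k ≤ q.length → q.getVert k ≠ x := by
      intro k hk hkq
      exact hp.2 (Walk.mem_support_iff_exists_getVert.mpr ⟨k, hkq, hk⟩)
    intro i hi j hj hij
    simp only [Walk.length_cons] at hi hj
    match i, j with
    | 0, 0 => rfl
    | 0, (j+1) =>
      rw [Walk.getVert_zero, Walk.getVert_cons_succ] at hij
      exact absurd hij.symm (hmem j (by omega))
    | (i+1), 0 =>
      rw [Walk.getVert_zero, Walk.getVert_cons_succ] at hij
      exact absurd hij (hmem i (by omega))
    | (i+1), (j+1) =>
      rw [Walk.getVert_cons_succ, Walk.getVert_cons_succ] at hij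
      have := ih hp.1 i (by omega) j (by omega) hij
      omega

private lemma takeUntil_getVert {a b w : V} (p : G.Walk a b) (hw : w ∈ p.support)
    {i : ℕ} (hi : i ≤ (p.takeUntil w hw).length) :
    (p.takeUntil w hw).getVert i = p.getVert i := by
  conv_rhs => rw [← Walk.take_spec p hw]
  rw [Walk.getVert_append]
  split_ifs with h
  · rfl
  · have h2 : i = (p.takeUntil w hw).length := by omega
    subst h2
    simp [Walk.getVert_length, Walk.getVert_zero]

private lemma concat_getVert {a b c : V} (p : G.Walk a b) (h : G.Adj b c) {i : ℕ}
    (hi : i ≤ p.length) : (p.concat h).getVert i = p.getVert i := by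
  rw [Walk.concat_eq_append, Walk.getVert_append]
  split_ifs with h'
  · rfl
  · have h2 : i = p.length := by omega
    subst h2
    simp [Walk.getVert_length]

private lemma concat_isPath {a b c : V} {p : G.Walk a b} (hp : p.IsPath) (h : G.Adj b c)
    (hc : c ∉ p.support) : (p.concat h).IsPath := by
  rw [← Walk.isPath_reverse_iff, Walk.reverse_concat, Walk.cons_isPath_iff]
  exact ⟨hp.reverse, by simpa using hc⟩

private lemma maltwalk_prefix {v a b : V} {p : G.Walk v a} {q : G.Walk v b}
    (hgv : ∀ i, i ≤ q.length → q.getVert i = p.getVert i) (hlen : q.length ≤ p.length)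
    (hp : MAltWalk G M p) : MAltWalk G M q := by
  intro i hi
  rw [hgv i (le_of_lt hi), hgv (i+1) hi]
  exact hp i (lt_of_lt_of_le hi hlen)

private lemma maltwalk_concat {v u w : V} {p : G.Walk v u} (hp : MAltWalk G M p)
    (h : G.Adj u w) (hlast : M.Adj u w ↔ Odd p.length) : MAltWalk G M (p.concat h) := by
  intro i hi
  rw [Walk.length_concat] at hi
  rcases Nat.lt_or_ge i p.length with h1 | h1
  · rw [concat_getVert _ _ (by omega), concat_getVert _ _ (by omega)]
    exact hp i h1
  · have h2 : i = p.length := by omega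
    subst h2
    rw [concat_getVert _ _ le_rfl, Walk.getVert_length]
    have h3 : (p.concat h).getVert (p.length + 1) = w := by
      have := (p.concat h).getVert_length
      rwa [Walk.length_concat] at this
    rw [h3]
    exact hlast

private lemma last_edge {v u : V} {p : G.Walk v u} (hp : MAltWalk G M p)
    (hodd : Odd (p.length - 1)) (hL : p.length ≠ 0) :
    M.Adj (p.getVert (p.length - 1)) u := by
  have h1 := hp (p.length - 1) (by omega)
  rw [show p.length - 1 + 1 = p.length by omega, Walk.getVert_length] at h1
  exact h1.mpr hodd

private lemma even_end_partner {v u w : V} (hm : M.IsMatching) (hv : v ∉ M.verts)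
    {p : G.Walk v u} (halt : MAltWalk G M p) (heven : Even p.length)
    (hw : M.Adj u w) : w = p.getVert (p.length - 1) := by
  have hL : p.length ≠ 0 := by
    rintro h0
    have huv : u = v := by rw [← Walk.getVert_zero p, ← h0, Walk.getVert_length]
    exact hv (huv ▸ M.edge_vert hw)
  have hodd : Odd (p.length - 1) := by
    obtain ⟨t, ht⟩ := heven
    exact ⟨t - 1, by omega⟩
  have hlast := last_edge halt hodd hL
  obtain ⟨x, hx, huniq⟩ := hm (M.edge_vert hw)
  exact (huniq w hw).trans (huniq _ hlast.symm).symm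

private lemma medge_on_path {v u a b : V} (hm : M.IsMatching) (hv : v ∉ M.verts)
    {p : G.Walk v u} (hp : p.IsPath) (halt : MAltWalk G M p)
    (hab : M.Adj a b) (ha : a ∈ p.support) :
    a = u ∨ ∃ i, Odd i ∧ i < p.length ∧
      ((a = p.getVert i ∧ b = p.getVert (i+1)) ∨ (a = p.getVert (i+1) ∧ b = p.getVert i)) := by
  obtain ⟨j, hja, hjle⟩ := Walk.mem_support_iff_exists_getVert.mp ha
  by_cases hjL : j = p.length
  · left; rw [← hja, hjL, Walk.getVert_length]
  have hj0 : j ≠ 0 := by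
    rintro rfl
    rw [Walk.getVert_zero] at hja
    exact hv (hja ▸ M.edge_vert hab)
  right
  obtain ⟨x, hx, huniq⟩ := hm (M.edge_vert hab)
  rcases Nat.even_or_odd j with hje | hjo
  · -- j even, j ≥ 1 : the matching edge at a is edge (j-1)
    obtain ⟨k, rfl⟩ : ∃ k, j = k + 1 := ⟨j - 1, by omega⟩
    have hko : Odd k := by
      rcases hje with ⟨t, ht⟩
      exact ⟨t - 1, by omega⟩
    have hkL : k < p.length := by omega
    have hadj : M.Adj (p.getVert k) (p.getVert (k+1)) := (halt k hkL).mpr hko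
    rw [hja] at hadj
    have hb : b = p.getVert k := (huniq b hab).trans (huniq _ hadj.symm).symm
    exact ⟨k, hko, hkL, Or.inr ⟨hja.symm, hb⟩⟩
  · have hjL' : j < p.length := by omega
    have hadj : M.Adj (p.getVert j) (p.getVert (j+1)) := (halt j hjL').mpr hjo
    rw [hja] at hadj
    have hb : b = p.getVert (j+1) := (huniq b hab).trans (huniq _ hadj).symm
    exact ⟨j, hjo, hjL', Or.inl ⟨hja.symm, hb⟩⟩

/-- The augmented subgraph along a walk: keep matching edges away from the walk,
and take the even-indexed edges of the walk. -/
private def augment (G : SimpleGraph V) (M : G.Subgraph) {v u : V} (p : G.Walk v u) :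
    G.Subgraph where
  verts := M.verts ∪ {x | x ∈ p.support}
  Adj a b := (M.Adj a b ∧ a ∉ p.support ∧ b ∉ p.support) ∨
    (∃ i, Even i ∧ i < p.length ∧
      ((a = p.getVert i ∧ b = p.getVert (i+1)) ∨ (a = p.getVert (i+1) ∧ b = p.getVert i)))
  adj_sub := by
    rintro a b (⟨h1, -, -⟩ | ⟨i, -, hiL, (⟨rfl, rfl⟩ | ⟨rfl, rfl⟩)⟩)
    · exact M.adj_sub h1
    · exact p.adj_getVert_succ hiL
    · exact (p.adj_getVert_succ hiL).symm
  edge_vert := by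
    rintro a b (⟨h1, -, -⟩ | ⟨i, -, hiL, (⟨rfl, -⟩ | ⟨rfl, -⟩)⟩)
    · exact Set.mem_union_left _ (M.edge_vert h1)
    · exact Set.mem_union_right _ (Walk.mem_support_iff_exists_getVert.mpr ⟨i, rfl, by omega⟩)
    · exact Set.mem_union_right _ (Walk.mem_support_iff_exists_getVert.mpr ⟨i+1, rfl, by omega⟩)
  symm := by
    constructor
    rintro a b (⟨h1, h2, h3⟩ | ⟨i, h2, h3, h4⟩)
    · exact Or.inl ⟨h1.symm, h3, h2⟩
    · exact Or.inr ⟨i, h2, h3, by tauto⟩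

private lemma augment_adj (G : SimpleGraph V) (M : G.Subgraph) {v u : V} (p : G.Walk v u)
    (a b : V) : (augment G M p).Adj a b ↔
    (M.Adj a b ∧ a ∉ p.support ∧ b ∉ p.support) ∨
    (∃ i, Even i ∧ i < p.length ∧
      ((a = p.getVert i ∧ b = p.getVert (i+1)) ∨ (a = p.getVert (i+1) ∧ b = p.getVert i))) :=
  Iff.rfl

private lemma odd_path_saturated (hM : IsMaximumMatching G M) {v u : V} (hv : v ∉ M.verts)
    {p : G.Walk v u} (hp : p.IsPath) (halt : MAltWalk G M p) (hodd : Odd p.length) :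
    u ∈ M.verts := by
  by_contra hu
  obtain ⟨m, hm⟩ := hodd
  have hinj := path_getVert_inj hp
  have f1 : ∀ i, i < p.length → (M.Adj (p.getVert i) (p.getVert (i+1)) ↔ Odd i) := halt
  have f2 : ∀ a b, M.Adj a b → a ∈ p.support →
      ∃ i, Odd i ∧ i < p.length ∧
        ((a = p.getVert i ∧ b = p.getVert (i+1)) ∨ (a = p.getVert (i+1) ∧ b = p.getVert i)) := by
    intro a b hab ha
    rcases medge_on_path hM.1 hv hp halt hab ha with h | h
    · exact absurd (h ▸ M.edge_vert hab) hu
    · exact h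
  set M' : G.Subgraph := augment G M p with hM'def
  -- M' is a matching
  have hM'match : M'.IsMatching := by
    rintro a ha
    by_cases hsup : a ∈ p.support
    · obtain ⟨j, hja, hjle⟩ := Walk.mem_support_iff_exists_getVert.mp hsup
      rcases Nat.even_or_odd j with hje | hjo
      · have hjL : j < p.length := by
          rcases hje with ⟨t, ht⟩; omega
        refine ⟨p.getVert (j+1), (augment_adj G M p _ _).mpr
          (Or.inr ⟨j, hje, hjL, Or.inl ⟨hja.symm, rfl⟩⟩), ?_⟩
        intro c hc
        rcases (augment_adj G M p _ _).mp hc with ⟨-, hns, -⟩ | ⟨i, hie, hiL, (⟨hai, hci⟩ | ⟨hai, hci⟩)⟩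
        · exact absurd hsup hns
        · have hij : i = j := hinj i (by omega) j hjle (by rw [← hai, hja])
          rw [hci, hij]
        · exfalso
          have hij : i + 1 = j := hinj (i+1) (by omega) j hjle (by rw [← hai, hja])
          rcases hie with ⟨t, ht⟩; rcases hje with ⟨r, hr⟩; omega
      · obtain ⟨k, rfl⟩ : ∃ k, j = k + 1 := ⟨j - 1, by rcases hjo with ⟨t, ht⟩; omega⟩
        have hke : Even k := by rcases hjo with ⟨t, ht⟩; exact ⟨t, by omega⟩
        have hkL : k < p.length := by omega
        refine ⟨p.getVert k, (augment_adj G M p _ _).mpr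
          (Or.inr ⟨k, hke, hkL, Or.inr ⟨hja.symm, rfl⟩⟩), ?_⟩
        intro c hc
        rcases (augment_adj G M p _ _).mp hc with ⟨-, hns, -⟩ | ⟨i, hie, hiL, (⟨hai, hci⟩ | ⟨hai, hci⟩)⟩
        · exact absurd hsup hns
        · exfalso
          have hij : i = k + 1 := hinj i (by omega) (k+1) hjle (by rw [← hai, hja])
          rcases hie with ⟨t, ht⟩; rcases hke with ⟨r, hr⟩; omega
        · have hij : i + 1 = k + 1 := hinj (i+1) (by omega) (k+1) hjle (by rw [← hai, hja])
          rw [hci, show i = k by omega]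
    · have haM : a ∈ M.verts := by
        rcases ha with h | h
        · exact h
        · exact absurd h hsup
      obtain ⟨b, hb, hbuniq⟩ := hM.1 haM
      have hbs : b ∉ p.support := by
        intro hbsup
        obtain ⟨i, hio, hiL, hcase⟩ := f2 b a hb.symm hbsup
        rcases hcase with ⟨-, hai⟩ | ⟨-, hai⟩
        · exact hsup (Walk.mem_support_iff_exists_getVert.mpr ⟨i+1, hai.symm, by omega⟩)
        · exact hsup (Walk.mem_support_iff_exists_getVert.mpr ⟨i, hai.symm, by omega⟩)
      refine ⟨b, (augment_adj G M p _ _).mpr (Or.inl ⟨hb, hsup, hbs⟩), ?_⟩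
      intro c hc
      rcases (augment_adj G M p _ _).mp hc with ⟨h1, -, -⟩ | ⟨i, -, hiL, (⟨hai, -⟩ | ⟨hai, -⟩)⟩
      · exact hbuniq c h1
      · exact absurd (Walk.mem_support_iff_exists_getVert.mpr ⟨i, hai.symm, by omega⟩) hsup
      · exact absurd (Walk.mem_support_iff_exists_getVert.mpr ⟨i+1, hai.symm, by omega⟩) hsup
  -- edge counting
  set Eodd : Set (Sym2 V) :=
    (fun t => s(p.getVert (2*t+1), p.getVert (2*t+2))) '' ↑(Finset.range m) with hEodd
  set Eeven : Set (Sym2 V) :=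
    (fun t => s(p.getVert (2*t), p.getVert (2*t+1))) '' ↑(Finset.range (m+1)) with hEeven
  have hedge : M'.edgeSet = (M.edgeSet \ Eodd) ∪ Eeven := by
    ext e
    induction e using Sym2.ind with
    | _ a b =>
      simp only [Subgraph.mem_edgeSet, Set.mem_union, Set.mem_diff, hEodd, hEeven,
        Set.mem_image, Finset.mem_coe, Finset.mem_range]
      constructor
      · intro hadj
        rcases (augment_adj G M p _ _).mp hadj with ⟨h1, h2, h3⟩ | ⟨i, hie, hiL, hcase⟩
        · refine Or.inl ⟨h1, ?_⟩
          rintro ⟨t, ht, heq⟩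
          rw [Sym2.eq_iff] at heq
          rcases heq with ⟨h4, -⟩ | ⟨h4, -⟩
          · exact h2 (Walk.mem_support_iff_exists_getVert.mpr ⟨2*t+1, h4, by omega⟩)
          · exact h3 (Walk.mem_support_iff_exists_getVert.mpr ⟨2*t+1, h4, by omega⟩)
        · obtain ⟨t, rfl⟩ : ∃ t, i = 2*t := by rcases hie with ⟨r, hr⟩; exact ⟨r, by omega⟩
          refine Or.inr ⟨t, by omega, ?_⟩
          rcases hcase with ⟨rfl, rfl⟩ | ⟨rfl, rfl⟩
          · rfl
          · exact Sym2.eq_swap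
      · rintro (⟨h1, h2⟩ | ⟨t, ht, heq⟩)
        · refine (augment_adj G M p _ _).mpr (Or.inl ⟨h1, ?_, ?_⟩)
          · intro ha
            obtain ⟨i, hio, hiL, hcase⟩ := f2 a b h1 ha
            obtain ⟨t, rfl⟩ := hio
            apply h2
            refine ⟨t, by omega, ?_⟩
            rcases hcase with ⟨rfl, rfl⟩ | ⟨rfl, rfl⟩
            · rfl
            · exact Sym2.eq_swap
          · intro hbs
            obtain ⟨i, hio, hiL, hcase⟩ := f2 b a h1.symm hbs
            obtain ⟨t, rfl⟩ := hio
            apply h2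
            refine ⟨t, by omega, ?_⟩
            rcases hcase with ⟨rfl, rfl⟩ | ⟨rfl, rfl⟩
            · exact Sym2.eq_swap
            · rfl
        · rw [Sym2.eq_iff] at heq
          refine (augment_adj G M p _ _).mpr (Or.inr ⟨2*t, even_two_mul t, by omega, ?_⟩)
          rcases heq with ⟨h4, h5⟩ | ⟨h4, h5⟩
          · exact Or.inl ⟨h4.symm, h5.symm⟩
          · exact Or.inr ⟨h5.symm, h4.symm⟩
  have hEodd_sub : Eodd ⊆ M.edgeSet := by
    rintro e ⟨t, ht, rfl⟩
    rw [Finset.mem_coe, Finset.mem_range] at ht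
    exact Subgraph.mem_edgeSet.mpr ((f1 (2*t+1) (by omega)).mpr ⟨t, rfl⟩)
  have hdisj : Disjoint (M.edgeSet \ Eodd) Eeven := by
    rw [Set.disjoint_right]
    rintro e ⟨t, ht, rfl⟩ ⟨he, -⟩
    rw [Finset.mem_coe, Finset.mem_range] at ht
    rw [Subgraph.mem_edgeSet] at he
    exact (Nat.not_odd_iff_even.mpr (even_two_mul t)) ((f1 (2*t) (by omega)).mp he)
  have hcodd : Eodd.ncard = m := by
    rw [hEodd, Set.ncard_image_of_injOn, Set.ncard_coe_finset, Finset.card_range]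
    intro x hx y hy hxy
    rw [Finset.mem_coe, Finset.mem_range] at hx hy
    rw [Sym2.eq_iff] at hxy
    rcases hxy with ⟨e1, -⟩ | ⟨e1, e2⟩
    · have := hinj (2*x+1) (by omega) (2*y+1) (by omega) e1; omega
    · have := hinj (2*x+1) (by omega) (2*y+2) (by omega) e1; omega
  have hceven : Eeven.ncard = m + 1 := by
    rw [hEeven, Set.ncard_image_of_injOn, Set.ncard_coe_finset, Finset.card_range]
    intro x hx y hy hxy
    rw [Finset.mem_coe, Finset.mem_range] at hx hy
    rw [Sym2.eq_iff] at hxy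
    rcases hxy with ⟨e1, -⟩ | ⟨e1, e2⟩
    · have := hinj (2*x) (by omega) (2*y) (by omega) e1; omega
    · have := hinj (2*x) (by omega) (2*y+1) (by omega) e1; omega
  have hm_le : m ≤ M.edgeSet.ncard := by
    rw [← hcodd]
    exact Set.ncard_le_ncard hEodd_sub (Set.toFinite _)
  have hcount : M'.edgeSet.ncard = M.edgeSet.ncard + 1 := by
    rw [hedge, Set.ncard_union_eq hdisj (Set.toFinite _) (Set.toFinite _),
      Set.ncard_diff hEodd_sub (Set.toFinite _), hcodd, hceven]
    omega
  have hle := hM.2 M' hM'match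
  omega

end Aux

/-- properties of the even- and odd-reachable sets of an `M`-unsaturated
vertex in a `C_{4k}`-free bipartite graph. -/
theorem stmt2 (G : SimpleGraph V) (hb : IsBipartite G) (hc : C4kFree G)
    (M : G.Subgraph) (hM : IsMaximumMatching G M) (v : V) (hv : v ∉ M.verts) :
    Re G M v ∩ Ro G M v = ∅ ∧
    (∀ u ∈ Ro G M v, u ∈ M.verts) ∧
    (Re G M v).ncard = (Ro G M v).ncard + 1 ∧
    (∀ u ∈ Re G M v, ∀ w : V, G.Adj u w → w ∈ Ro G M v) ∧
    IsIndep G (Re G M v) ∧ IsIndep G (Ro G M v) := by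
  obtain ⟨s, hs⟩ := hb
  have hvRe : v ∈ Re G M v :=
    ⟨Walk.nil, Walk.IsPath.nil, fun i hi => by simp at hi, by simp⟩
  have h1 : Re G M v ∩ Ro G M v = ∅ := by
    ext u
    simp only [Set.mem_inter_iff, Set.mem_empty_iff_false, iff_false, not_and]
    rintro ⟨p, -, -, hpe⟩ ⟨q, -, -, hqo⟩
    exact (Nat.not_even_iff_odd.mpr hqo) ((walks_same_parity hs p q).mp hpe)
  have h2 : ∀ u ∈ Ro G M v, u ∈ M.verts := by
    rintro u ⟨p, hp, halt, hodd⟩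
    exact odd_path_saturated hM hv hp halt hodd
  have h4 : ∀ u ∈ Re G M v, ∀ w : V, G.Adj u w → w ∈ Ro G M v := by
    rintro u ⟨p, hp, halt, heven⟩ w h
    by_cases hws : w ∈ p.support
    · refine ⟨p.takeUntil w hws, hp.takeUntil hws,
        maltwalk_prefix (fun i hi => takeUntil_getVert p hws hi)
          (Walk.length_takeUntil_le p hws) halt, ?_⟩
      have hpar := walks_same_parity hs (p.takeUntil w hws) (p.concat h)
      rw [Walk.length_concat] at hpar
      rw [← Nat.not_even_iff_odd]
      intro hev
      exact (Nat.even_add_one.mp (hpar.mp hev)) heven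
    · have hnM : ¬ M.Adj u w := by
        intro hMuw
        apply hws
        rw [even_end_partner hM.1 hv halt heven hMuw]
        exact Walk.mem_support_iff_exists_getVert.mpr ⟨p.length - 1, rfl, by omega⟩
      refine ⟨p.concat h, concat_isPath hp h hws,
        maltwalk_concat halt h (iff_of_false hnM (Nat.not_odd_iff_even.mpr heven)), ?_⟩
      rw [Walk.length_concat]
      exact heven.add_one
  have h3 : (Re G M v).ncard = (Ro G M v).ncard + 1 := by
    set f : V → V := fun x => if hx : x ∈ M.verts then (hM.1 hx).choose else x with hf
    have hf_adj : ∀ x, x ∈ M.verts → M.Adj x (f x) := by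
      intro x hx
      rw [hf]
      simp only [dif_pos hx]
      exact (hM.1 hx).choose_spec.1
    have hf_eq : ∀ x y, M.Adj x y → f x = y := by
      intro x y hxy
      have hx : x ∈ M.verts := M.edge_vert hxy
      rw [hf]
      simp only [dif_pos hx]
      exact ((hM.1 hx).choose_spec.2 y hxy).symm
    have hbij : Set.BijOn f (Ro G M v) (Re G M v \ {v}) := by
      refine ⟨?_, ?_, ?_⟩
      · intro u hu
        have huM : u ∈ M.verts := h2 u hu
        have hadj : M.Adj u (f u) := hf_adj u huM
        obtain ⟨p, hp, halt, hodd⟩ := hu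
        have hfs : f u ∉ p.support := by
          intro hfsup
          rcases medge_on_path hM.1 hv hp halt hadj.symm hfsup with hequ | ⟨i, hio, hiL, hcase⟩
          · have hGadj := M.adj_sub hadj
            rw [hequ] at hGadj
            exact G.loopless.irrefl u hGadj
          · obtain ⟨mm, hmm⟩ := hodd
            rcases hcase with ⟨-, hui⟩ | ⟨-, hui⟩
            · have he1 : i + 1 = p.length := path_getVert_inj hp (i+1) (by omega) p.length
                le_rfl (by rw [Walk.getVert_length]; exact hui.symm)
              obtain ⟨t, ht⟩ := hio; omega
            · have he1 : i = p.length := path_getVert_inj hp i (by omega) p.length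
                le_rfl (by rw [Walk.getVert_length]; exact hui.symm)
              omega
        have hGadj : G.Adj u (f u) := M.adj_sub hadj
        refine ⟨⟨p.concat hGadj, concat_isPath hp hGadj hfs,
          maltwalk_concat halt hGadj (iff_of_true hadj hodd),
          by rw [Walk.length_concat]; exact hodd.add_one⟩, ?_⟩
        simp only [Set.mem_singleton_iff]
        intro hfv
        apply hv
        rw [← hfv]
        exact M.edge_vert hadj.symm
      · intro u1 h1' u2 h2' heq
        have e1 : M.Adj u1 (f u1) := hf_adj u1 (h2 u1 h1')
        have e2 : M.Adj u2 (f u2) := hf_adj u2 (h2 u2 h2')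
        rw [heq] at e1
        obtain ⟨x, -, huniq⟩ := hM.1 (M.edge_vert e2.symm)
        rw [huniq u1 e1.symm, huniq u2 e2.symm]
      · rintro w ⟨hwRe, hwv⟩
        obtain ⟨p, hp, halt, heven⟩ := hwRe
        have hL0 : p.length ≠ 0 := by
          intro h0
          apply hwv
          simp only [Set.mem_singleton_iff]
          rw [← Walk.getVert_length p, h0, Walk.getVert_zero]
        have hoddL1 : Odd (p.length - 1) := by
          obtain ⟨t, ht⟩ := heven
          exact ⟨t - 1, by omega⟩
        have hlast : M.Adj (p.getVert (p.length - 1)) w := last_edge halt hoddL1 hL0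
        have hys : p.getVert (p.length - 1) ∈ p.support :=
          Walk.mem_support_iff_exists_getVert.mpr ⟨_, rfl, by omega⟩
        refine ⟨p.getVert (p.length - 1), ?_, hf_eq _ _ hlast⟩
        have hqpre : ∀ i, i ≤ (p.takeUntil _ hys).length →
            (p.takeUntil _ hys).getVert i = p.getVert i :=
          fun i hi => takeUntil_getVert p hys hi
        have hqlen : (p.takeUntil _ hys).length = p.length - 1 := by
          have h1' : (p.takeUntil _ hys).getVert (p.takeUntil _ hys).length
              = p.getVert (p.takeUntil _ hys).length := hqpre _ le_rfl
          rw [Walk.getVert_length] at h1'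
          exact path_getVert_inj hp _ (Walk.length_takeUntil_le p hys) (p.length - 1)
            (by omega) h1'.symm
        exact ⟨p.takeUntil _ hys, hp.takeUntil hys,
          maltwalk_prefix hqpre (Walk.length_takeUntil_le p hys) halt,
          by rw [hqlen]; exact hoddL1⟩
    have himg : (f '' (Ro G M v)).ncard = (Ro G M v).ncard :=
      Set.ncard_image_of_injOn hbij.injOn
    rw [hbij.image_eq] at himg
    rw [← himg]
    exact (Set.ncard_diff_singleton_add_one hvRe (Set.toFinite _)).symm
  have h5e : IsIndep G (Re G M v) := by
    rintro u ⟨p, -, -, hpe⟩ w ⟨q, -, -, hqe⟩ hadj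
    have hpar := walks_same_parity hs p (q.concat hadj.symm)
    rw [Walk.length_concat] at hpar
    exact (Nat.even_add_one.mp (hpar.mp hpe)) hqe
  have h5o : IsIndep G (Ro G M v) := by
    rintro u ⟨p, -, -, hpo⟩ w ⟨q, -, -, hqo⟩ hadj
    have hpar := walks_same_parity hs p (q.concat hadj.symm)
    rw [Walk.length_concat] at hpar
    exact (Nat.not_even_iff_odd.mpr hpo) (hpar.mpr hqo.add_one)
  exact ⟨h1, h2, h3, h4, h5e, h5o⟩


end C4kPaper
end

section
/- If G is a C_{4k}-free bipartite graph, then the support Supp(G) is an independent set of G. -/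
open scoped Classical

namespace C4kPaper

open SimpleGraph

variable {V : Type*} [Fintype V] [DecidableEq V]

set_option linter.unusedSectionVars false
set_option maxHeartbeats 1000000

/-- Build a walk from a function listing successive vertices. -/
def walkOfFn (G : SimpleGraph V) : ∀ (n : ℕ) (f : ℕ → V),
    (∀ i < n, G.Adj (f i) (f (i + 1))) → G.Walk (f 0) (f n)
  | 0, _, _ => Walk.nil
  | (n + 1), f, h =>
    Walk.cons (h 0 (Nat.succ_pos n))
      (walkOfFn G n (fun i => f (i + 1)) (fun i hi => h (i + 1) (by omega)))

lemma walkOfFn_length (G : SimpleGraph V) (n : ℕ) (f : ℕ → V)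
    (h : ∀ i < n, G.Adj (f i) (f (i + 1))) : (walkOfFn G n f h).length = n := by
  induction n generalizing f with
  | zero => rfl
  | succ n ih => simp [walkOfFn, ih]

lemma walkOfFn_support (G : SimpleGraph V) (n : ℕ) (f : ℕ → V)
    (h : ∀ i < n, G.Adj (f i) (f (i + 1))) :
    (walkOfFn G n f h).support = (List.range (n + 1)).map f := by
  induction n generalizing f with
  | zero => rfl
  | succ n ih =>
    rw [List.range_succ_eq_map]
    simp [walkOfFn, ih, List.map_map]

lemma walkOfFn_edges (G : SimpleGraph V) (n : ℕ) (f : ℕ → V)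
    (h : ∀ i < n, G.Adj (f i) (f (i + 1))) :
    (walkOfFn G n f h).edges = (List.range n).map (fun i => s(f i, f (i + 1))) := by
  induction n generalizing f with
  | zero => rfl
  | succ n ih =>
    rw [List.range_succ_eq_map]
    simp [walkOfFn, ih, List.map_map]

lemma exists_cycle_of_fn {G : SimpleGraph V} (f : ℕ → V) (n : ℕ) (h3 : 3 ≤ n)
    (hadj : ∀ i < n, G.Adj (f i) (f (i + 1))) (hcl : f n = f 0)
    (hinj : ∀ i < n, ∀ j < n, f i = f j → i = j) :
    ∃ (v : V) (c : G.Walk v v), c.IsCycle ∧ c.length = n := by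
  have h1 : ∀ i < n - 1, G.Adj ((fun i => f (i + 1)) i) ((fun i => f (i + 1)) (i + 1)) := by
    intro i hi; exact hadj (i + 1) (by omega)
  let p : G.Walk (f 1) (f (n - 1 + 1)) := walkOfFn G (n - 1) (fun i => f (i + 1)) h1
  have hend : f (n - 1 + 1) = f 0 := by rw [show n - 1 + 1 = n by omega, hcl]
  have hq_support : (p.copy rfl hend).support = (List.range n).map (fun i => f (i + 1)) := by
    rw [Walk.support_copy]
    show (walkOfFn G (n-1) _ h1).support = _
    rw [walkOfFn_support, show n - 1 + 1 = n by omega]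
  have hq_edges : (p.copy rfl hend).edges
      = (List.range (n - 1)).map (fun i => s(f (i + 1), f (i + 1 + 1))) := by
    rw [Walk.edges_copy]
    show (walkOfFn G (n-1) _ h1).edges = _
    rw [walkOfFn_edges]
  refine ⟨f 0, Walk.cons (hadj 0 (by omega)) (p.copy rfl hend), ?_, ?_⟩
  · rw [Walk.cons_isCycle_iff]
    constructor
    · rw [Walk.isPath_def, hq_support]
      apply List.Nodup.map_on
      · intro i hi j hj hij
        simp only [List.mem_range] at hi hj
        rcases Nat.lt_or_ge (i + 1) n with h | h
        · rcases Nat.lt_or_ge (j + 1) n with h' | h'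
          · exact Nat.succ_injective (hinj _ h _ h' hij)
          · have hj1 : j + 1 = n := by omega
            rw [hj1, hcl] at hij
            have := hinj _ h _ (by omega : (0:ℕ) < n) hij
            omega
        · have hi1 : i + 1 = n := by omega
          rcases Nat.lt_or_ge (j + 1) n with h' | h'
          · rw [hi1, hcl] at hij
            have := hinj _ (by omega : (0:ℕ) < n) _ h' hij
            omega
          · omega
      · exact List.nodup_range
    · rw [hq_edges]
      intro hmem
      simp only [List.mem_map, List.mem_range] at hmem
      obtain ⟨i, hi, hei⟩ := hmem
      rw [Sym2.eq_iff] at hei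
      rcases hei with ⟨he1, he2⟩ | ⟨he1, he2⟩
      · have := hinj (i + 1) (by omega) 0 (by omega) he1
        omega
      · rcases Nat.lt_or_ge (i + 2) n with h | h
        · have := hinj (i + 1 + 1) (by omega) 0 (by omega) he2
          omega
        · have h2 : i + 2 = n := by omega
          have := hinj (i + 1) (by omega) 1 (by omega) he1
          omega
  · rw [Walk.length_cons, Walk.length_copy, walkOfFn_length]
    omega


lemma det_ne_zero_iff_cols {m : ℕ} (N : Matrix (Fin m) (Fin m) ℝ) :
    N.det ≠ 0 ↔ LinearIndependent ℝ (fun j i => N i j) := by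
  rw [Ne, ← Matrix.exists_mulVec_eq_zero_iff, Fintype.linearIndependent_iff]
  constructor
  · intro h g hg
    by_contra hne
    push_neg at hne
    obtain ⟨i, hi⟩ := hne
    exact h ⟨g, fun hg0 => hi (congrFun hg0 i), by
      ext i2
      have := congrFun hg i2
      simpa [Matrix.mulVec, dotProduct, mul_comm] using this⟩
  · rintro h ⟨v, hv0, hv⟩
    apply hv0
    ext i
    refine h v ?_ i
    ext i2
    have := congrFun hv i2
    simpa [Matrix.mulVec, dotProduct, mul_comm] using this

lemma det_ne_zero_iff_rows {m : ℕ} (N : Matrix (Fin m) (Fin m) ℝ) :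
    N.det ≠ 0 ↔ LinearIndependent ℝ (fun i j => N i j) := by
  rw [← Matrix.det_transpose]
  rw [det_ne_zero_iff_cols]
  rfl

lemma cons_injective {V' : Type*} {m : ℕ} {x : V'} {f : Fin m → V'}
    (hx : ∀ i, f i ≠ x) (hf : Function.Injective f) :
    Function.Injective (Fin.cons x f : Fin (m+1) → V') := by
  intro i j hij
  induction i using Fin.cases with
  | zero =>
    induction j using Fin.cases with
    | zero => rfl
    | succ j => rw [Fin.cons_zero, Fin.cons_succ] at hij; exact absurd hij.symm (hx j)
  | succ i =>
    induction j using Fin.cases with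
    | zero => rw [Fin.cons_succ, Fin.cons_zero] at hij; exact absurd hij (hx i)
    | succ j => rw [Fin.cons_succ, Fin.cons_succ] at hij; exact congrArg Fin.succ (hf hij)


lemma sign_eq_of_adj {G : SimpleGraph V} (hc : C4kFree G) {m : ℕ} (ρ γ : Fin m → V)
    (hρ : Function.Injective ρ) (hγ : Function.Injective γ)
    (hd : ∀ i j, ρ i ≠ γ j) (σ τ : Equiv.Perm (Fin m))
    (hσ : ∀ i, G.Adj (ρ i) (γ (σ i))) (hτ : ∀ i, G.Adj (ρ i) (γ (τ i))) :
    Equiv.Perm.sign σ = Equiv.Perm.sign τ := by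
  set π := τ⁻¹ * σ with hπdef
  suffices hπ : Equiv.Perm.sign π = 1 by
    have hστ : σ = τ * π := by rw [hπdef, ← mul_assoc, mul_inv_cancel, one_mul]
    rw [hστ, map_mul, hπ, mul_one]
  -- every cycle of π has odd length
  have hfac : ∀ nn ∈ π.cycleType, Odd nn := by
    intro nn hnn
    rw [Equiv.Perm.cycleType_def, Multiset.mem_map] at hnn
    obtain ⟨c, hcmem, hcard⟩ := hnn
    rw [← Finset.mem_def] at hcmem
    rw [Equiv.Perm.mem_cycleFactorsFinset_iff] at hcmem
    obtain ⟨hcyc, hagree⟩ := hcmem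
    rw [← hcard]
    simp only [Function.comp_apply]
    by_contra hodd
    rw [Nat.not_odd_iff_even] at hodd
    set n := c.support.card with hn
    have hn2 : 2 ≤ n := hcyc.two_le_card_support
    obtain ⟨i₀, hi₀⟩ := Finset.card_pos.mp (by omega : 0 < c.support.card)
    have hmem : ∀ j : ℕ, (c ^ j) i₀ ∈ c.support := fun j =>
      Equiv.Perm.pow_apply_mem_support.mpr hi₀
    have hstep : ∀ j : ℕ, (c ^ (j + 1)) i₀ = π ((c ^ j) i₀) := by
      intro j
      rw [pow_succ', Equiv.Perm.mul_apply]
      exact hagree _ (hmem j)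
    have hordc : orderOf c = n := hcyc.orderOf
    have hcn : (c ^ n) i₀ = i₀ := by
      rw [← hordc, pow_orderOf_eq_one]; rfl
    have hkey : ∀ j l : ℕ, j ≤ l → l < n → (c ^ j) i₀ = (c ^ l) i₀ → j = l := by
      intro j l hjl hl he
      have h1 : (c ^ (l - j)) ((c ^ j) i₀) = (c ^ j) i₀ := by
        rw [← Equiv.Perm.mul_apply, ← pow_add, Nat.sub_add_cancel hjl, ← he]
      have h2 : c ^ (l - j) = 1 := (hcyc.pow_eq_one_iff' (Equiv.Perm.mem_support.mp (hmem j))).mpr h1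
      have h3 : n ∣ l - j := hordc ▸ orderOf_dvd_of_pow_eq_one h2
      rcases Nat.eq_zero_or_pos (l - j) with h4 | h4
      · omega
      · exact absurd (Nat.le_of_dvd h4 h3) (by omega)
    have hpowinj : ∀ j l : ℕ, j < n → l < n → (c ^ j) i₀ = (c ^ l) i₀ → j = l := by
      intro j l hj hl he
      rcases le_total j l with h | h
      · exact hkey j l h hl he
      · exact (hkey l j h hj he.symm).symm
    set f : ℕ → V := fun k =>
      if k % 2 = 0 then ρ ((c ^ (k / 2)) i₀) else γ (σ ((c ^ (k / 2)) i₀)) with hf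
    have hadjf : ∀ i < 2 * n, G.Adj (f i) (f (i + 1)) := by
      intro i hi
      rcases Nat.even_or_odd i with he | ho
      · have h1 : i % 2 = 0 := Nat.even_iff.mp he
        have h2 : (i + 1) % 2 = 1 := by omega
        have h3 : (i + 1) / 2 = i / 2 := by omega
        simp only [hf, h1, h2, h3, if_pos, if_neg, one_ne_zero, reduceIte]
        exact hσ _
      · have h1 : i % 2 = 1 := Nat.odd_iff.mp ho
        have h2 : (i + 1) % 2 = 0 := by omega
        have h3 : (i + 1) / 2 = i / 2 + 1 := by omega
        simp only [hf, h1, h2, h3, one_ne_zero, reduceIte]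
        have h4 : τ ((c ^ (i / 2 + 1)) i₀) = σ ((c ^ (i / 2)) i₀) := by
          rw [hstep (i / 2), hπdef, Equiv.Perm.mul_apply, Equiv.Perm.inv_def, Equiv.apply_symm_apply]
        have h5 := hτ ((c ^ (i / 2 + 1)) i₀)
        rw [h4] at h5
        exact h5.symm
    have hclf : f (2 * n) = f 0 := by
      have h1 : (2 * n) % 2 = 0 := by omega
      have h2 : (2 * n) / 2 = n := by omega
      simp only [hf, h1, h2, reduceIte, Nat.zero_div, Nat.zero_mod, pow_zero]
      rw [hcn]
      rfl
    have hinjf : ∀ i < 2 * n, ∀ j < 2 * n, f i = f j → i = j := by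
      intro i hi j hj he
      rcases Nat.even_or_odd i with hpi | hpi <;> rcases Nat.even_or_odd j with hpj | hpj
      · have h1 : i % 2 = 0 := Nat.even_iff.mp hpi
        have h2 : j % 2 = 0 := Nat.even_iff.mp hpj
        simp only [hf, h1, h2, reduceIte] at he
        have := hpowinj (i / 2) (j / 2) (by omega) (by omega) (hρ he)
        omega
      · have h1 : i % 2 = 0 := Nat.even_iff.mp hpi
        have h2 : j % 2 = 1 := Nat.odd_iff.mp hpj
        simp only [hf, h1, h2, one_ne_zero, reduceIte] at he
        exact absurd he (hd _ _)
      · have h1 : i % 2 = 1 := Nat.odd_iff.mp hpi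
        have h2 : j % 2 = 0 := Nat.even_iff.mp hpj
        simp only [hf, h1, h2, one_ne_zero, reduceIte] at he
        exact absurd he.symm (hd _ _)
      · have h1 : i % 2 = 1 := Nat.odd_iff.mp hpi
        have h2 : j % 2 = 1 := Nat.odd_iff.mp hpj
        simp only [hf, h1, h2, one_ne_zero, reduceIte] at he
        have := hpowinj (i / 2) (j / 2) (by omega) (by omega) (σ.injective (hγ he))
        omega
    obtain ⟨v, w, hw, hwl⟩ := exists_cycle_of_fn f (2 * n) (by omega) hadjf hclf hinjf
    refine hc v w hw ?_
    rw [hwl]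
    obtain ⟨t, ht⟩ := hodd
    exact ⟨t, by omega⟩
  rw [Equiv.Perm.sign_of_cycleType']
  apply Multiset.prod_eq_one
  intro z hz
  rw [Multiset.mem_map] at hz
  obtain ⟨nn, hnn, rfl⟩ := hz
  rw [(hfac nn hnn).neg_one_pow, neg_neg]


lemma det_cons_ne_zero {G : SimpleGraph V} (hc : C4kFree G) {k : ℕ}
    {ρ γ : Fin k → V} {b a : V}
    (hρ' : Function.Injective (Fin.cons b ρ : Fin (k+1) → V))
    (hγ' : Function.Injective (Fin.cons a γ : Fin (k+1) → V))
    (hd : ∀ i j : Fin (k+1), (Fin.cons b ρ : Fin (k+1) → V) i ≠ (Fin.cons a γ : Fin (k+1) → V) j)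
    (hba : G.Adj b a)
    (hdet : ((G.adjMatrix ℝ).submatrix ρ γ).det ≠ 0) :
    ((G.adjMatrix ℝ).submatrix (Fin.cons b ρ) (Fin.cons a γ)).det ≠ 0 := by
  set M := G.adjMatrix ℝ with hM
  set ρ' : Fin (k+1) → V := Fin.cons b ρ with hρdef
  set γ' : Fin (k+1) → V := Fin.cons a γ with hγdef
  -- extract a good permutation from hdet
  have hτ0 : ∃ τ : Equiv.Perm (Fin k), ∀ i, G.Adj (ρ (τ i)) (γ i) := by
    by_contra hno
    push_neg at hno
    apply hdet
    rw [Matrix.det_apply']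
    apply Finset.sum_eq_zero
    intro σ _
    obtain ⟨i, hi⟩ := hno σ
    have : M (ρ (σ i)) (γ i) = 0 := by
      rw [hM, SimpleGraph.adjMatrix_apply, if_neg hi]
    rw [Finset.prod_eq_zero (Finset.mem_univ i) this, mul_zero]
  obtain ⟨τ₀, hτ₀⟩ := hτ0
  set τ' : Equiv.Perm (Fin (k+1)) := Equiv.Perm.decomposeFin.symm (0, τ₀) with hτ'def
  have hτ'good : ∀ i, G.Adj (ρ' (τ' i)) (γ' i) := by
    intro i
    induction i using Fin.cases with
    | zero =>
      rw [hτ'def, Equiv.Perm.decomposeFin_symm_apply_zero]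
      simpa [hρdef, hγdef] using hba
    | succ j =>
      rw [hτ'def, Equiv.Perm.decomposeFin_symm_apply_succ]
      simpa [hρdef, hγdef] using hτ₀ j
  set Good : Equiv.Perm (Fin (k+1)) → Prop := fun σ => ∀ i, G.Adj (ρ' (σ i)) (γ' i) with hGood
  have hsign : ∀ σ, Good σ → Equiv.Perm.sign σ = Equiv.Perm.sign τ' := by
    intro σ hσ
    have h1 : ∀ i, G.Adj (ρ' i) (γ' (σ⁻¹ i)) := by
      intro i
      have := hσ (σ⁻¹ i)
      rwa [Equiv.Perm.inv_def, Equiv.apply_symm_apply] at this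
    have h2 : ∀ i, G.Adj (ρ' i) (γ' (τ'⁻¹ i)) := by
      intro i
      have := hτ'good (τ'⁻¹ i)
      rwa [Equiv.Perm.inv_def, Equiv.apply_symm_apply] at this
    have h3 := sign_eq_of_adj hc ρ' γ' hρ' hγ' hd σ⁻¹ τ'⁻¹ h1 h2
    rwa [Equiv.Perm.sign_inv, Equiv.Perm.sign_inv] at h3
  have hprod : ∀ σ : Equiv.Perm (Fin (k+1)),
      ∏ i, M (ρ' (σ i)) (γ' i) = if Good σ then (1:ℝ) else 0 := by
    intro σ
    by_cases hg : Good σ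
    · rw [if_pos hg]
      apply Finset.prod_eq_one
      intro i _
      rw [hM, SimpleGraph.adjMatrix_apply, if_pos (hg i)]
    · rw [if_neg hg]
      obtain ⟨i, hi⟩ := not_forall.mp hg
      apply Finset.prod_eq_zero (Finset.mem_univ i)
      rw [hM, SimpleGraph.adjMatrix_apply, if_neg hi]
  have hdet2 : ((M.submatrix ρ' γ').det : ℝ)
      = ((Equiv.Perm.sign τ' : ℤ) : ℝ) * (Finset.univ.filter Good).card := by
    rw [Matrix.det_apply']
    have : ∀ σ : Equiv.Perm (Fin (k+1)),
        ((Equiv.Perm.sign σ : ℤ) : ℝ) * ∏ i, (M.submatrix ρ' γ') (σ i) i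
          = if Good σ then ((Equiv.Perm.sign τ' : ℤ) : ℝ) else 0 := by
      intro σ
      have hs : ∀ i, (M.submatrix ρ' γ') (σ i) i = M (ρ' (σ i)) (γ' i) := fun i => rfl
      simp only [hs]
      rw [hprod σ]
      by_cases hg : Good σ
      · rw [if_pos hg, if_pos hg, hsign σ hg, mul_one]
      · rw [if_neg hg, if_neg hg, mul_zero]
    rw [Finset.sum_congr rfl (fun σ _ => this σ)]
    rw [← Finset.sum_filter, Finset.sum_const, nsmul_eq_mul, mul_comm]
  rw [hdet2]
  apply mul_ne_zero
  · rcases Int.units_eq_one_or (Equiv.Perm.sign τ') with h | h <;> rw [h] <;> norm_num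
  · rw [Nat.cast_ne_zero, ← Nat.pos_iff_ne_zero, Finset.card_pos]
    exact ⟨τ', Finset.mem_filter.mpr ⟨Finset.mem_univ _, hτ'good⟩⟩



/-- the support of a `C_{4k}`-free bipartite graph is an independent set. -/
theorem stmt5 (G : SimpleGraph V) (hb : IsBipartite G) (hc : C4kFree G) :
    IsIndep G (supp G) := by
  obtain ⟨s, hs⟩ := hb
  intro a ha0 b hb0 hadj
  obtain ⟨x, hx0, hxa⟩ := ha0
  obtain ⟨y, hy0, hyb⟩ := hb0
  obtain ⟨A, haA, hbA, hA⟩ :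
      ∃ A : Set V, a ∈ A ∧ b ∉ A ∧ ∀ ⦃u v : V⦄, G.Adj u v → (u ∈ A ↔ v ∉ A) := by
    by_cases hmem : a ∈ s
    · exact ⟨s, hmem, (hs hadj).mp hmem, hs⟩
    · refine ⟨sᶜ, hmem, fun hbc => hbc (((hs hadj).not_left).mp hmem), fun u v h => ?_⟩
      have := hs h
      simp only [Set.mem_compl_iff]
      tauto
  set M := G.adjMatrix ℝ with hMdef
  have hMsymm : ∀ u v : V, M u v = M v u := by
    intro u v
    simp [hMdef, SimpleGraph.adjMatrix_apply, G.adj_comm]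
  have hBB : ∀ u v : V, u ∉ A → v ∉ A → M u v = 0 := by
    intro u v hu hv
    simp only [hMdef, SimpleGraph.adjMatrix_apply, ite_eq_right_iff]
    intro h
    exact absurd ((hA h).mpr hv) (by tauto)
  have hAA : ∀ u v : V, u ∈ A → v ∈ A → M u v = 0 := by
    intro u v hu hv
    simp only [hMdef, SimpleGraph.adjMatrix_apply, ite_eq_right_iff]
    intro h
    exact absurd ((hA h).mp hu) (by tauto)
  set Afin : Finset V := Finset.univ.filter (· ∈ A) with hAfin
  set Bfin : Finset V := Finset.univ.filter (· ∉ A) with hBfin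
  have hcolrel : ∀ u : V, u ∉ A → ∑ v ∈ Afin, x v * M u v = 0 := by
    intro u hu
    have h0 : ∑ v : V, M u v * x v = 0 := by
      have := congrFun hx0 u
      simpa [Matrix.mulVec, dotProduct, hMdef] using this
    rw [← h0]
    rw [show (Finset.univ : Finset V) = Afin ∪ Bfin by
      ext v; by_cases hv : v ∈ A <;> simp [hAfin, hBfin, hv]]
    rw [Finset.sum_union (by
      rw [Finset.disjoint_left]; intro v hv hv'
      simp [hAfin, hBfin] at hv hv'; exact hv' hv)]
    have hz : ∑ v ∈ Bfin, M u v * x v = 0 := by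
      apply Finset.sum_eq_zero
      intro v hv
      rw [hBB u v hu (by simpa [hBfin] using hv), zero_mul]
    rw [hz, add_zero]
    exact Finset.sum_congr rfl fun v _ => mul_comm _ _
  have hrowrel : ∀ v : V, v ∈ A → ∑ u ∈ Bfin, y u * M u v = 0 := by
    intro v hv
    have h0 : ∑ u : V, M v u * y u = 0 := by
      have := congrFun hy0 v
      simpa [Matrix.mulVec, dotProduct, hMdef] using this
    rw [← h0]
    rw [show (Finset.univ : Finset V) = Afin ∪ Bfin by
      ext u; by_cases hu : u ∈ A <;> simp [hAfin, hBfin, hu]]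
    rw [Finset.sum_union (by
      rw [Finset.disjoint_left]; intro u hu hu'
      simp [hAfin, hBfin] at hu hu'; exact hu' hu)]
    have hz : ∑ u ∈ Afin, M v u * y u = 0 := by
      apply Finset.sum_eq_zero
      intro u hu
      rw [hAA v u hv (by simpa [hAfin] using hu), zero_mul]
    rw [hz, zero_add]
    exact Finset.sum_congr rfl fun u _ => by rw [mul_comm, hMsymm]
  -- the maximality setup
  set P : ℕ → Prop := fun k => ∃ ρ γ : Fin k → V, Function.Injective ρ ∧ Function.Injective γ ∧
      (∀ i, ρ i ∉ A ∧ ρ i ≠ b) ∧ (∀ i, γ i ∈ A ∧ γ i ≠ a) ∧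
      ((M.submatrix ρ γ).det ≠ 0) with hPdef
  have hP0 : P 0 := by
    refine ⟨Fin.elim0, Fin.elim0, fun i => i.elim0, fun i => i.elim0,
      fun i => i.elim0, fun i => i.elim0, ?_⟩
    rw [Matrix.det_isEmpty]
    exact one_ne_zero
  have hPbound : ∀ k, P k → k ≤ Fintype.card V := by
    rintro k ⟨ρ, _, hρ, _⟩
    simpa using Fintype.card_le_of_injective ρ hρ
  set k := Nat.findGreatest P (Fintype.card V) with hkdef
  have hPk : P k := Nat.findGreatest_spec (Nat.zero_le _) hP0
  obtain ⟨ρ, γ, hρinj, hγinj, hρprop, hγprop, hdet⟩ := hPk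
  have hρ'inj : Function.Injective (Fin.cons b ρ : Fin (k+1) → V) :=
    cons_injective (fun i => (hρprop i).2) hρinj
  have hγ'inj : Function.Injective (Fin.cons a γ : Fin (k+1) → V) :=
    cons_injective (fun i => (hγprop i).2) hγinj
  have hρ'B : ∀ i : Fin (k+1), (Fin.cons b ρ : Fin (k+1) → V) i ∉ A := by
    intro i
    induction i using Fin.cases with
    | zero => simpa using hbA
    | succ j => simpa using (hρprop j).1
  have hγ'A : ∀ i : Fin (k+1), (Fin.cons a γ : Fin (k+1) → V) i ∈ A := by
    intro i
    induction i using Fin.cases with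
    | zero => simpa using haA
    | succ j => simpa using (hγprop j).1
  have hd : ∀ i j : Fin (k+1),
      (Fin.cons b ρ : Fin (k+1) → V) i ≠ (Fin.cons a γ : Fin (k+1) → V) j :=
    fun i j h => (hρ'B i) (h ▸ hγ'A j)
  have hdet' : ((M.submatrix (Fin.cons b ρ) (Fin.cons a γ)).det ≠ 0) :=
    det_cons_ne_zero hc hρ'inj hγ'inj hd hadj.symm hdet
  -- columns
  have hcols_indep :
      LinearIndependent ℝ (Fin.cons (fun i => M ((Fin.cons b ρ : Fin (k+1) → V) i) a)
        (fun (j : Fin k) (i : Fin (k+1)) => M ((Fin.cons b ρ : Fin (k+1) → V) i) (γ j))) := by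
    have h1 := (det_ne_zero_iff_cols _).mp hdet'
    have h2 : (fun (j : Fin (k+1)) (i : Fin (k+1)) =>
        (M.submatrix (Fin.cons b ρ) (Fin.cons a γ)) i j)
        = Fin.cons (fun i => M ((Fin.cons b ρ : Fin (k+1) → V) i) a)
          (fun (j : Fin k) (i : Fin (k+1)) => M ((Fin.cons b ρ : Fin (k+1) → V) i) (γ j)) := by
      funext j
      induction j using Fin.cases with
      | zero => simp [Matrix.submatrix_apply]
      | succ jj => simp [Matrix.submatrix_apply]
    rw [h2] at h1
    exact h1
  obtain ⟨htail, hnotmem⟩ := linearIndependent_fin_cons.mp hcols_indep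
  have hsum : ∑ v ∈ Afin, x v • (fun i : Fin (k+1) => M ((Fin.cons b ρ : Fin (k+1) → V) i) v)
      = 0 := by
    funext i
    rw [Finset.sum_apply]
    simp only [Pi.smul_apply, smul_eq_mul, Pi.zero_apply]
    exact hcolrel _ (hρ'B i)
  have haAfin : a ∈ Afin := by simp [hAfin, haA]
  have hspan_a : (fun i : Fin (k+1) => M ((Fin.cons b ρ : Fin (k+1) → V) i) a)
      ∈ Submodule.span ℝ
        ((fun v => (fun i : Fin (k+1) => M ((Fin.cons b ρ : Fin (k+1) → V) i) v)) ''
          ↑(Afin.erase a)) := by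
    have hsplit := Finset.sum_erase_add Afin
      (fun v => x v • (fun i : Fin (k+1) => M ((Fin.cons b ρ : Fin (k+1) → V) i) v)) haAfin
    rw [hsum] at hsplit
    have hxa' : x a • (fun i : Fin (k+1) => M ((Fin.cons b ρ : Fin (k+1) → V) i) a)
        = - ∑ v ∈ Afin.erase a, x v • (fun i : Fin (k+1) =>
            M ((Fin.cons b ρ : Fin (k+1) → V) i) v) := by
      rw [eq_neg_iff_add_eq_zero]
      linear_combination hsplit
    have hmem1 : x a • (fun i : Fin (k+1) => M ((Fin.cons b ρ : Fin (k+1) → V) i) a)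
        ∈ Submodule.span ℝ
          ((fun v => (fun i : Fin (k+1) => M ((Fin.cons b ρ : Fin (k+1) → V) i) v)) ''
            ↑(Afin.erase a)) := by
      rw [hxa']
      apply neg_mem
      apply Submodule.sum_mem
      intro v hv
      exact Submodule.smul_mem _ _ (Submodule.subset_span ⟨v, hv, rfl⟩)
    have heq : (fun i : Fin (k+1) => M ((Fin.cons b ρ : Fin (k+1) → V) i) a)
        = (x a)⁻¹ • (x a • (fun i : Fin (k+1) => M ((Fin.cons b ρ : Fin (k+1) → V) i) a)) := by
      rw [smul_smul, inv_mul_cancel₀ hxa, one_smul]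
    rw [heq]
    exact Submodule.smul_mem _ _ hmem1
  have hex : ∃ v0, (v0 ∈ A ∧ v0 ≠ a) ∧ (fun i : Fin (k+1) => M ((Fin.cons b ρ : Fin (k+1) → V) i) v0)
      ∉ Submodule.span ℝ (Set.range fun (j : Fin k) (i : Fin (k+1)) =>
          M ((Fin.cons b ρ : Fin (k+1) → V) i) (γ j)) := by
    by_contra hno
    push_neg at hno
    apply hnotmem
    refine Submodule.span_le.mpr ?_ hspan_a
    rintro _ ⟨v, hv, rfl⟩
    rw [Finset.mem_coe, Finset.mem_erase, hAfin, Finset.mem_filter] at hv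
    exact hno v ⟨hv.2.2, hv.1⟩
  obtain ⟨v0, ⟨hv0A, hv0a⟩, hv0span⟩ := hex
  have hγ''indep0 : LinearIndependent ℝ
      (Fin.cons (fun i : Fin (k+1) => M ((Fin.cons b ρ : Fin (k+1) → V) i) v0)
        (fun (j : Fin k) (i : Fin (k+1)) => M ((Fin.cons b ρ : Fin (k+1) → V) i) (γ j))) :=
    linearIndependent_fin_cons.mpr ⟨htail, hv0span⟩
  have hγ''inj : Function.Injective (Fin.cons v0 γ : Fin (k+1) → V) :=
    cons_injective (fun i h => hv0span (by rw [← h]; exact Submodule.subset_span ⟨i, rfl⟩)) hγinj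
  have hdet'' : (M.submatrix (Fin.cons b ρ) (Fin.cons v0 γ)).det ≠ 0 := by
    rw [det_ne_zero_iff_cols]
    have h2 : (fun (j : Fin (k+1)) (i : Fin (k+1)) =>
        (M.submatrix (Fin.cons b ρ) (Fin.cons v0 γ)) i j)
        = Fin.cons (fun i : Fin (k+1) => M ((Fin.cons b ρ : Fin (k+1) → V) i) v0)
          (fun (j : Fin k) (i : Fin (k+1)) => M ((Fin.cons b ρ : Fin (k+1) → V) i) (γ j)) := by
      funext j
      induction j using Fin.cases with
      | zero => simp [Matrix.submatrix_apply]
      | succ jj => simp [Matrix.submatrix_apply]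
    rw [h2]
    exact hγ''indep0
  -- rows phase
  have hγ''A : ∀ j : Fin (k+1), (Fin.cons v0 γ : Fin (k+1) → V) j ∈ A := by
    intro j
    induction j using Fin.cases with
    | zero => simpa using hv0A
    | succ jj => simpa using (hγprop jj).1
  have hrows_indep0 : LinearIndependent ℝ
      (Fin.cons (fun j : Fin (k+1) => M b ((Fin.cons v0 γ : Fin (k+1) → V) j))
        (fun (i : Fin k) (j : Fin (k+1)) => M (ρ i) ((Fin.cons v0 γ : Fin (k+1) → V) j))) := by
    have h1 := (det_ne_zero_iff_rows _).mp hdet''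
    have h2 : (fun (i : Fin (k+1)) (j : Fin (k+1)) =>
        (M.submatrix (Fin.cons b ρ) (Fin.cons v0 γ)) i j)
        = Fin.cons (fun j : Fin (k+1) => M b ((Fin.cons v0 γ : Fin (k+1) → V) j))
          (fun (i : Fin k) (j : Fin (k+1)) => M (ρ i) ((Fin.cons v0 γ : Fin (k+1) → V) j)) := by
      funext i
      induction i using Fin.cases with
      | zero => simp [Matrix.submatrix_apply]
      | succ ii => simp [Matrix.submatrix_apply]
    rw [h2] at h1
    exact h1
  obtain ⟨hrtail, hrnotmem⟩ := linearIndependent_fin_cons.mp hrows_indep0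
  have hsumr : ∑ u ∈ Bfin, y u • (fun j : Fin (k+1) => M u ((Fin.cons v0 γ : Fin (k+1) → V) j))
      = 0 := by
    funext j
    rw [Finset.sum_apply]
    simp only [Pi.smul_apply, smul_eq_mul, Pi.zero_apply]
    exact hrowrel _ (hγ''A j)
  have hbBfin : b ∈ Bfin := by simp [hBfin, hbA]
  have hspan_b : (fun j : Fin (k+1) => M b ((Fin.cons v0 γ : Fin (k+1) → V) j))
      ∈ Submodule.span ℝ
        ((fun u => (fun j : Fin (k+1) => M u ((Fin.cons v0 γ : Fin (k+1) → V) j))) ''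
          ↑(Bfin.erase b)) := by
    have hsplit := Finset.sum_erase_add Bfin
      (fun u => y u • (fun j : Fin (k+1) => M u ((Fin.cons v0 γ : Fin (k+1) → V) j))) hbBfin
    rw [hsumr] at hsplit
    have hyb' : y b • (fun j : Fin (k+1) => M b ((Fin.cons v0 γ : Fin (k+1) → V) j))
        = - ∑ u ∈ Bfin.erase b, y u • (fun j : Fin (k+1) =>
            M u ((Fin.cons v0 γ : Fin (k+1) → V) j)) := by
      rw [eq_neg_iff_add_eq_zero]
      linear_combination hsplit
    have hmem1 : y b • (fun j : Fin (k+1) => M b ((Fin.cons v0 γ : Fin (k+1) → V) j))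
        ∈ Submodule.span ℝ
          ((fun u => (fun j : Fin (k+1) => M u ((Fin.cons v0 γ : Fin (k+1) → V) j))) ''
            ↑(Bfin.erase b)) := by
      rw [hyb']
      apply neg_mem
      apply Submodule.sum_mem
      intro u hu
      exact Submodule.smul_mem _ _ (Submodule.subset_span ⟨u, hu, rfl⟩)
    have heq : (fun j : Fin (k+1) => M b ((Fin.cons v0 γ : Fin (k+1) → V) j))
        = (y b)⁻¹ • (y b • (fun j : Fin (k+1) => M b ((Fin.cons v0 γ : Fin (k+1) → V) j))) := by
      rw [smul_smul, inv_mul_cancel₀ hyb, one_smul]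
    rw [heq]
    exact Submodule.smul_mem _ _ hmem1
  have hexr : ∃ u0, (u0 ∉ A ∧ u0 ≠ b) ∧
      (fun j : Fin (k+1) => M u0 ((Fin.cons v0 γ : Fin (k+1) → V) j))
      ∉ Submodule.span ℝ (Set.range fun (i : Fin k) (j : Fin (k+1)) =>
          M (ρ i) ((Fin.cons v0 γ : Fin (k+1) → V) j)) := by
    by_contra hno
    push_neg at hno
    apply hrnotmem
    refine Submodule.span_le.mpr ?_ hspan_b
    rintro _ ⟨u, hu, rfl⟩
    rw [Finset.mem_coe, Finset.mem_erase, hBfin, Finset.mem_filter] at hu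
    exact hno u ⟨hu.2.2, hu.1⟩
  obtain ⟨u0, ⟨hu0A, hu0b⟩, hu0span⟩ := hexr
  have hρ''indep0 : LinearIndependent ℝ
      (Fin.cons (fun j : Fin (k+1) => M u0 ((Fin.cons v0 γ : Fin (k+1) → V) j))
        (fun (i : Fin k) (j : Fin (k+1)) => M (ρ i) ((Fin.cons v0 γ : Fin (k+1) → V) j))) :=
    linearIndependent_fin_cons.mpr ⟨hrtail, hu0span⟩
  have hρ''inj : Function.Injective (Fin.cons u0 ρ : Fin (k+1) → V) :=
    cons_injective (fun i h => hu0span (by rw [← h]; exact Submodule.subset_span ⟨i, rfl⟩)) hρinj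
  have hdetF : (M.submatrix (Fin.cons u0 ρ) (Fin.cons v0 γ)).det ≠ 0 := by
    rw [det_ne_zero_iff_rows]
    have h2 : (fun (i : Fin (k+1)) (j : Fin (k+1)) =>
        (M.submatrix (Fin.cons u0 ρ) (Fin.cons v0 γ)) i j)
        = Fin.cons (fun j : Fin (k+1) => M u0 ((Fin.cons v0 γ : Fin (k+1) → V) j))
          (fun (i : Fin k) (j : Fin (k+1)) => M (ρ i) ((Fin.cons v0 γ : Fin (k+1) → V) j)) := by
      funext i
      induction i using Fin.cases with
      | zero => simp [Matrix.submatrix_apply]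
      | succ ii => simp [Matrix.submatrix_apply]
    rw [h2]
    exact hρ''indep0
  have hPk1 : P (k + 1) := by
    refine ⟨Fin.cons u0 ρ, Fin.cons v0 γ, hρ''inj, hγ''inj, ?_, ?_, hdetF⟩
    · intro i
      induction i using Fin.cases with
      | zero => simpa using ⟨hu0A, hu0b⟩
      | succ ii => simpa using hρprop ii
    · intro i
      induction i using Fin.cases with
      | zero => simpa using ⟨hv0A, hv0a⟩
      | succ ii => simpa using hγprop ii
  have hle : k + 1 ≤ k := by
    rw [hkdef]
    exact Nat.le_findGreatest (hPbound _ hPk1) hPk1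
  omega


end C4kPaper
end

section
/- Let G be a C_{4k}-free bipartite graph. If G has a perfect matching, then the adjacency matrix of G is nonsingular. -/
open scoped Classical

namespace C4kPaper

open SimpleGraph

variable {V : Type*} [Fintype V] [DecidableEq V]

/-! ### Auxiliary machinery for Statement 6 -/

section Stmt6Aux

variable {G : SimpleGraph V}

/-- The walk `v, σ v, σ² v, …, σ^[k] v` when every vertex is adjacent to its image. -/
noncomputable def iterWalk (σ : Equiv.Perm V) (h : ∀ v, G.Adj v (σ v)) :
    (k : ℕ) → (v : V) → G.Walk v ((⇑σ)^[k] v)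
  | 0, _ => SimpleGraph.Walk.nil
  | k+1, v => SimpleGraph.Walk.cons (h v)
      ((iterWalk σ h k (σ v)).copy rfl (Function.iterate_succ_apply (⇑σ) k v).symm)

lemma iterWalk_length (σ : Equiv.Perm V) (h : ∀ v, G.Adj v (σ v)) (k : ℕ) (v : V) :
    (iterWalk σ h k v).length = k := by
  induction k generalizing v with
  | zero => simp [iterWalk]
  | succ k ih => simp [iterWalk, ih]

lemma iterWalk_support (σ : Equiv.Perm V) (h : ∀ v, G.Adj v (σ v)) (k : ℕ) (v : V) :
    (iterWalk σ h k v).support = (List.range (k+1)).map (fun i => (⇑σ)^[i] v) := by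
  induction k generalizing v with
  | zero => simp [iterWalk, List.range_succ]
  | succ k ih =>
    rw [show (iterWalk σ h (k+1) v) = SimpleGraph.Walk.cons (h v)
      ((iterWalk σ h k (σ v)).copy rfl (Function.iterate_succ_apply (⇑σ) k v).symm) from rfl]
    rw [SimpleGraph.Walk.support_cons, SimpleGraph.Walk.support_copy, ih,
      List.range_succ_eq_map (n := k+1), List.map_cons, List.map_map]
    simp only [Function.iterate_zero, id_eq, List.cons.injEq, true_and, Function.comp_def]
    apply List.map_congr_left
    intro i _
    rw [← Function.iterate_succ_apply]

lemma iterWalk_edges (σ : Equiv.Perm V) (h : ∀ v, G.Adj v (σ v)) (k : ℕ) (v : V) :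
    (iterWalk σ h k v).edges
      = (List.range k).map (fun i => s((⇑σ)^[i] v, (⇑σ)^[i+1] v)) := by
  induction k generalizing v with
  | zero => simp [iterWalk]
  | succ k ih =>
    rw [show (iterWalk σ h (k+1) v) = SimpleGraph.Walk.cons (h v)
      ((iterWalk σ h k (σ v)).copy rfl (Function.iterate_succ_apply (⇑σ) k v).symm) from rfl]
    rw [SimpleGraph.Walk.edges_cons, SimpleGraph.Walk.edges_copy, ih,
      List.range_succ_eq_map (n := k), List.map_cons, List.map_map]
    simp only [Function.iterate_zero, id_eq, Function.iterate_one, List.cons.injEq,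
      true_and, Function.comp_def]
    refine ⟨rfl, ?_⟩
    apply List.map_congr_left
    intro i _
    simp only [Nat.succ_eq_add_one]
    rw [← Function.iterate_succ_apply, ← Function.iterate_succ_apply]

/-- Every cycle length of an "adjacency permutation" of a `C₄ₖ`-free bipartite graph
is `≡ 2 (mod 4)`. -/
lemma cycleType_mod_four (σ : Equiv.Perm V) (h : ∀ v, G.Adj v (σ v))
    (hb : IsBipartite G) (hc : C4kFree G) :
    ∀ l ∈ σ.cycleType, l % 4 = 2 := by
  intro l hl
  have hl2 : 2 ≤ l := Equiv.Perm.two_le_of_mem_cycleType hl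
  obtain ⟨c, τ, hστ, hdisj, hcyc, hcard⟩ := Equiv.Perm.mem_cycleType_iff.1 hl
  obtain ⟨v, hv⟩ : ∃ v, v ∈ c.support := by
    have : 0 < c.support.card := by omega
    exact Finset.card_pos.1 this |>.imp fun _ h => h
  -- σ agrees with c on the support of c
  have hagree : ∀ w ∈ c.support, σ w = c w := by
    intro w hw
    have hτ : τ w = w := by
      rcases hdisj w with h1 | h1
      · exact absurd h1 (Equiv.Perm.mem_support.1 hw)
      · exact h1
    rw [hστ, Equiv.Perm.mul_apply, hτ]
  have hiter : ∀ i : ℕ, (⇑σ)^[i] v = (c ^ i) v := by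
    intro i
    induction i with
    | zero => rfl
    | succ i ih =>
      rw [Function.iterate_succ_apply', ih,
        hagree _ (Equiv.Perm.pow_apply_mem_support.2 hv), pow_succ', Equiv.Perm.mul_apply]
  have hco : c.IsCycleOn (c.support : Set V) := by
    have := hcyc.isCycleOn
    have hset : {x | c x ≠ x} = (c.support : Set V) := by
      ext x; simp [Equiv.Perm.mem_support]
    rwa [hset] at this
  have hpe : ∀ i : ℕ, ((c ^ i) v = v ↔ l ∣ i) := by
    intro i
    rw [← hcard]
    exact hco.pow_apply_eq hv
  have hl4 : (⇑σ)^[l] v = v := by rw [hiter]; exact (hpe l).2 dvd_rfl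
  -- injectivity for exponents below l
  have hinj : ∀ i j : ℕ, i < l → j < l → (⇑σ)^[i] v = (⇑σ)^[j] v → i = j := by
    have key : ∀ i j : ℕ, i ≤ j → j < l → (⇑σ)^[i] v = (⇑σ)^[j] v → i = j := by
      intro i j hij hjl he
      rw [hiter, hiter] at he
      have : (c ^ (j - i)) ((c ^ i) v) = (c ^ i) v := by
        rw [← Equiv.Perm.mul_apply, ← pow_add]
        rw [show j - i + i = j from by omega]
        exact he.symm
      have hmem : (c ^ i) v ∈ c.support := Equiv.Perm.pow_apply_mem_support.2 hv
      have hdvd : l ∣ j - i := by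
        rw [← hcard]; exact (hco.pow_apply_eq hmem).1 this
      rcases Nat.eq_zero_or_pos (j - i) with h0 | h0
      · omega
      · have := Nat.le_of_dvd h0 hdvd
        omega
    intro i j hi hj he
    rcases le_total i j with hij | hij
    · exact key i j hij hj he
    · exact (key j i hij hi he.symm).symm
  -- evenness from bipartiteness
  obtain ⟨s, hs⟩ := hb
  have hpar : ∀ i : ℕ, ((⇑σ)^[i] v ∈ s ↔ (v ∈ s ↔ Even i)) := by
    intro i
    induction i with
    | zero => simp
    | succ i ih =>
      rw [Function.iterate_succ_apply']
      have := hs (h ((⇑σ)^[i] v))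
      rw [Nat.even_add_one]
      tauto
  have heven : Even l := by
    have := hpar l
    rw [hl4] at this
    by_cases hvs : v ∈ s <;> tauto
  -- now rule out 4 ∣ l
  rcases eq_or_lt_of_le hl2 with h2 | h3
  · omega
  · -- l ≥ 3; build an actual cycle of length l in G
    have hl4' : 4 ≤ l := by
      obtain ⟨r, hr⟩ := heven; omega
    obtain ⟨l', rfl⟩ : ∃ l', l = l' + 1 := ⟨l - 1, by omega⟩
    have hend : (⇑σ)^[l'] (σ v) = v := by
      rw [← Function.iterate_succ_apply]
      exact hl4
    set p : G.Walk (σ v) v := (iterWalk σ h l' (σ v)).copy rfl hend with hp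
    have hps : p.support = (List.range (l' + 1)).map (fun i => (⇑σ)^[i+1] v) := by
      rw [hp, SimpleGraph.Walk.support_copy, iterWalk_support]
      apply List.map_congr_left
      intro i _
      rw [← Function.iterate_succ_apply]
    have hpath : p.IsPath := by
      rw [SimpleGraph.Walk.isPath_def, hps]
      refine List.Nodup.map_on ?_ List.nodup_range
      intro i hi j hj he
      rw [List.mem_range] at hi hj
      -- i+1, j+1 ∈ [1, l]
      rcases eq_or_lt_of_le (Nat.succ_le_of_lt hi) with hi' | hi' <;>
        rcases eq_or_lt_of_le (Nat.succ_le_of_lt hj) with hj' | hj' <;>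
        simp only [Nat.succ_eq_add_one] at hi' hj'
      · omega
      · exfalso
        rw [hi', hl4, show v = (⇑σ)^[0] v from rfl] at he
        have := hinj 0 (j+1) (by omega) hj' he
        omega
      · exfalso
        rw [hj', hl4, show v = (⇑σ)^[0] v from rfl] at he
        have := hinj (i+1) 0 hi' (by omega) he
        omega
      · exact Nat.succ_injective (hinj (i+1) (j+1) hi' hj' he)
    have hedge : s(v, σ v) ∉ p.edges := by
      rw [hp, SimpleGraph.Walk.edges_copy, iterWalk_edges]
      intro hmem
      rw [List.mem_map] at hmem
      obtain ⟨i, hi, he⟩ := hmem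
      rw [List.mem_range] at hi
      rw [← Function.iterate_succ_apply, ← Function.iterate_succ_apply] at he
      rw [Sym2.eq_iff] at he
      rcases he with ⟨he1, he2⟩ | ⟨he1, he2⟩ <;>
        simp only [Nat.succ_eq_add_one] at he1 he2
      · rw [show v = (⇑σ)^[0] v from rfl] at he1
        have := hinj (i+1) 0 (by omega) (by omega) he1
        omega
      · rw [show σ v = (⇑σ)^[1] v from rfl] at he1
        have hi1 : i + 1 = 1 := hinj (i+1) 1 (by omega) (by omega) he1
        rw [show i + 1 + 1 = 2 from by omega, show v = (⇑σ)^[0] v from rfl] at he2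
        have := hinj 2 0 (by omega) (by omega) he2
        omega
    have hcycle : (SimpleGraph.Walk.cons (h v) p).IsCycle := by
      rw [SimpleGraph.Walk.cons_isCycle_iff]
      exact ⟨hpath, hedge⟩
    have hnd : ¬ (4 ∣ (SimpleGraph.Walk.cons (h v) p).length) := hc v _ hcycle
    have hlen : (SimpleGraph.Walk.cons (h v) p).length = l' + 1 := by
      rw [SimpleGraph.Walk.length_cons, hp, SimpleGraph.Walk.length_copy, iterWalk_length]
    rw [hlen] at hnd
    obtain ⟨r, hr⟩ := heven
    rcases Nat.even_or_odd r with ⟨u, hu⟩ | ⟨u, hu⟩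
    · exact absurd ⟨u, by omega⟩ hnd
    · omega

lemma multiset_sum_mod (m : Multiset ℕ) (hm : ∀ l ∈ m, l % 4 = 2) :
    (m.sum + 2 * Multiset.card m) % 4 = 0 := by
  induction m using Multiset.induction_on with
  | empty => simp
  | cons a s ih =>
    have ha := hm a (Multiset.mem_cons_self a s)
    have hs := ih fun l hl => hm l (Multiset.mem_cons_of_mem hl)
    rw [Multiset.sum_cons, Multiset.card_cons]
    omega

lemma neg_one_pow_eq_of_mod {a b : ℕ} (hab : a % 2 = b % 2) :
    ((-1 : ℤˣ)) ^ a = (-1 : ℤˣ) ^ b := by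
  conv_lhs => rw [← Nat.div_add_mod a 2]
  conv_rhs => rw [← Nat.div_add_mod b 2]
  rw [hab, pow_add, pow_add, pow_mul, pow_mul]
  norm_num

/-- Any two adjacency permutations have the same sign. -/
lemma sign_eq_sign (σ τ : Equiv.Perm V) (hσ : ∀ v, G.Adj v (σ v)) (hτ : ∀ v, G.Adj v (τ v))
    (hb : IsBipartite G) (hc : C4kFree G) :
    Equiv.Perm.sign σ = Equiv.Perm.sign τ := by
  have hsup : ∀ (ρ : Equiv.Perm V), (∀ v, G.Adj v (ρ v)) →
      ρ.cycleType.sum = Fintype.card V := by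
    intro ρ hρ
    rw [Equiv.Perm.sum_cycleType]
    congr 1
    apply Finset.eq_univ_iff_forall.2
    intro v
    exact Equiv.Perm.mem_support.2 (G.ne_of_adj (hρ v)).symm
  have h1 := multiset_sum_mod σ.cycleType (cycleType_mod_four σ hσ hb hc)
  have h2 := multiset_sum_mod τ.cycleType (cycleType_mod_four τ hτ hb hc)
  rw [hsup σ hσ] at h1
  rw [hsup τ hτ] at h2
  rw [Equiv.Perm.sign_of_cycleType, Equiv.Perm.sign_of_cycleType, hsup σ hσ, hsup τ hτ]
  exact neg_one_pow_eq_of_mod (by omega)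

/-- The determinant of the adjacency matrix is nonzero. -/
lemma det_adjMatrix_ne_zero (G : SimpleGraph V) (hb : IsBipartite G) (hc : C4kFree G)
    (hpm : ∃ M : G.Subgraph, M.IsPerfectMatching) :
    (G.adjMatrix ℝ).det ≠ 0 := by
  classical
  obtain ⟨M, hM⟩ := hpm
  rw [SimpleGraph.Subgraph.isPerfectMatching_iff] at hM
  -- the matching as an involutive permutation
  have hinv : Function.Involutive (fun v => (hM v).choose) := by
    intro v
    have h1 : M.Adj v ((hM v).choose) := (hM v).choose_spec.1
    exact ((hM ((hM v).choose)).choose_spec.2 v h1.symm).symm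
  set σ₀ : Equiv.Perm V := hinv.toPerm _ with hσ₀
  have hadj₀ : ∀ v, G.Adj v (σ₀ v) := fun v => M.adj_sub (hM v).choose_spec.1
  -- determinant computation
  set P : Equiv.Perm V → Prop := fun σ => ∀ v, G.Adj v (σ v) with hP
  have hprod : ∀ σ : Equiv.Perm V,
      (∏ v, (G.adjMatrix ℝ) (σ v) v) = if P σ then 1 else 0 := by
    intro σ
    by_cases hσ : P σ
    · rw [if_pos hσ]
      apply Finset.prod_eq_one
      intro v _
      simp [SimpleGraph.adjMatrix_apply, (hσ v).symm]
    · rw [if_neg hσ]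
      have hσ' : ¬ ∀ v, G.Adj v (σ v) := hσ
      push_neg at hσ'
      obtain ⟨v, hv⟩ := hσ'
      apply Finset.prod_eq_zero (Finset.mem_univ v)
      have : ¬ G.Adj (σ v) v := fun hcon => hv hcon.symm
      simp [SimpleGraph.adjMatrix_apply, this]
  have hdet : (G.adjMatrix ℝ).det
      = ((Finset.univ.filter P).card : ℝ) * ((Equiv.Perm.sign σ₀ : ℤ) : ℝ) := by
    rw [Matrix.det_apply']
    calc (∑ σ : Equiv.Perm V, ((Equiv.Perm.sign σ : ℤ) : ℝ) * ∏ v, (G.adjMatrix ℝ) (σ v) v)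
        = ∑ σ : Equiv.Perm V, (if P σ then ((Equiv.Perm.sign σ₀ : ℤ) : ℝ) else 0) := by
          apply Finset.sum_congr rfl
          intro σ _
          rw [hprod σ]
          by_cases hσ : P σ
          · rw [if_pos hσ, if_pos hσ, mul_one,
              sign_eq_sign σ σ₀ hσ hadj₀ hb hc]
          · rw [if_neg hσ, if_neg hσ, mul_zero]
      _ = ∑ σ ∈ Finset.univ.filter P, ((Equiv.Perm.sign σ₀ : ℤ) : ℝ) :=
          (Finset.sum_filter _ _).symm
      _ = ((Finset.univ.filter P).card : ℝ) * ((Equiv.Perm.sign σ₀ : ℤ) : ℝ) := by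
          rw [Finset.sum_const, nsmul_eq_mul]
  rw [hdet]
  have hcard : (Finset.univ.filter P).card ≠ 0 := by
    apply Finset.card_ne_zero_of_mem (a := σ₀)
    exact Finset.mem_filter.2 ⟨Finset.mem_univ _, hadj₀⟩
  have hsign : ((Equiv.Perm.sign σ₀ : ℤ) : ℝ) ≠ 0 := by
    rcases Int.units_eq_one_or (Equiv.Perm.sign σ₀) with h | h <;> rw [h] <;> norm_num
  exact mul_ne_zero (Nat.cast_ne_zero.2 hcard) hsign

end Stmt6Aux
/-- a `C_{4k}`-free bipartite graph with a perfect matching has a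
nonsingular adjacency matrix. -/
theorem stmt6 (G : SimpleGraph V) (hb : IsBipartite G) (hc : C4kFree G)
    (hpm : ∃ M : G.Subgraph, M.IsPerfectMatching) :
    nullSet G = {0} := by
  have hdet := det_adjMatrix_ne_zero G hb hc hpm
  ext x
  constructor
  · intro hx
    exact Matrix.eq_zero_of_mulVec_eq_zero hdet hx
  · intro hx
    rw [Set.mem_singleton_iff] at hx
    subst hx
    show Matrix.mulVec (G.adjMatrix ℝ) 0 = 0
    simp

end C4kPaper
end

section
/- Let G be a C_{4k}-free bipartite graph. Then G has a perfect matching if and only if the adjacency matrix of G is nonsingular. -/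
open scoped Classical

namespace C4kPaper

open SimpleGraph

variable {V : Type*} [Fintype V] [DecidableEq V]

set_option linter.unusedSectionVars false

/-- Walk along a function with consecutive adjacencies. -/
def mkWalk (G : SimpleGraph V) (g : ℕ → V) (hg : ∀ n, G.Adj (g n) (g (n+1))) (a : ℕ) :
    (n : ℕ) → G.Walk (g a) (g (a + n))
  | 0 => Walk.nil
  | n+1 => (mkWalk G g hg a n).concat (hg (a+n))

lemma mkWalk_length (G : SimpleGraph V) (g : ℕ → V) (hg : ∀ n, G.Adj (g n) (g (n+1))) (a n : ℕ) :
    (mkWalk G g hg a n).length = n := by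
  induction n with
  | zero => rfl
  | succ n ih => rw [mkWalk, Walk.length_concat, ih]

lemma mkWalk_support (G : SimpleGraph V) (g : ℕ → V) (hg : ∀ n, G.Adj (g n) (g (n+1))) (a n : ℕ) :
    (mkWalk G g hg a n).support = (List.range (n+1)).map (fun k => g (a + k)) := by
  induction n with
  | zero => rfl
  | succ n ih =>
    rw [mkWalk, Walk.support_concat, ih, List.range_succ (n := n+1), List.map_append]
    simp
lemma mkWalk_edges (G : SimpleGraph V) (g : ℕ → V) (hg : ∀ n, G.Adj (g n) (g (n+1))) (a n : ℕ) :
    (mkWalk G g hg a n).edges = (List.range n).map (fun k => s(g (a + k), g (a + k + 1))) := by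
  induction n with
  | zero => rfl
  | succ n ih =>
    rw [mkWalk, Walk.edges_concat, ih, List.range_succ (n := n), List.map_append]
    simp [Nat.add_assoc]

lemma walk_even_iff {G : SimpleGraph V} {s : Set V}
    (hs : ∀ ⦃u v : V⦄, G.Adj u v → (u ∈ s ↔ v ∉ s))
    {u v : V} (p : G.Walk u v) : Even p.length ↔ (u ∈ s ↔ v ∈ s) := by
  induction p with
  | nil => simp
  | @cons u w v h q ih =>
    have h1 := hs h
    rw [Walk.length_cons, Nat.even_add_one, ih]
    tauto
lemma mkWalk_isCycle (G : SimpleGraph V) (g : ℕ → V) (hg : ∀ n, G.Adj (g n) (g (n+1)))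
    (i n : ℕ) (hn : 4 ≤ n) (h0 : g (i + n) = g i)
    (F1 : ∀ p q, p < q → q < n → g (i + p) ≠ g (i + q))
    (F2 : ∀ p q, 1 ≤ p → p < q → q ≤ n → g (i + p) ≠ g (i + q)) :
    ((mkWalk G g hg i n).copy rfl h0).IsCycle := by
  have key : ∀ p q, p < q → q < n → g (i + p) = g (i + q + 1) →
      g (i + p + 1) = g (i + q) → False := by
    intro p q hpq hq h1 h2
    have hq1 : p + 1 = q := by
      by_contra hne
      exact F2 (p+1) q (by omega) (by omega) (by omega) h2
    subst hq1
    rcases Nat.eq_zero_or_pos p with rfl | hp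
    · exact F2 2 n (by omega) (by omega) le_rfl (by
        have : g (i + 0) = g (i + (0 + 1) + 1) := h1
        simpa using this.symm.trans h0.symm)
    · exact F2 p (p + 2) hp (by omega) (by omega) (by simpa [Nat.add_assoc] using h1)
  rw [Walk.isCycle_def]
  refine ⟨?_, ?_, ?_⟩
  · rw [Walk.isTrail_def, Walk.edges_copy, mkWalk_edges]
    refine List.Nodup.map_on ?_ List.nodup_range
    intro p hp q hq he
    rw [List.mem_range] at hp hq
    rcases Sym2.eq_iff.mp he with ⟨h1, h2⟩ | ⟨h1, h2⟩
    · rcases lt_trichotomy p q with h | h | h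
      · exact absurd h1 (F1 p q h hq)
      · exact h
      · exact absurd h1.symm (F1 q p h hp)
    · rcases lt_trichotomy p q with h | h | h
      · exact absurd (key p q h hq h1 h2) (fun h => h)
      · exact h
      · exact absurd (key q p h hp h2.symm h1.symm) (fun h => h)
  · intro h
    have := congrArg Walk.length h
    rw [Walk.length_copy, mkWalk_length] at this
    simp at this; omega
  · rw [Walk.support_copy, mkWalk_support, List.range_succ_eq_map, List.map_cons,
      List.tail_cons, List.map_map]
    refine List.Nodup.map_on ?_ List.nodup_range
    intro p hp q hq he
    rw [List.mem_range] at hp hq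
    simp only [Function.comp] at he
    rcases lt_trichotomy p q with h | h | h
    · exact absurd he (F2 (p+1) (q+1) (by omega) (by omega) (by omega))
    · exact h
    · exact absurd he.symm (F2 (q+1) (p+1) (by omega) (by omega) (by omega))

lemma pm_of_nonsingular (G : SimpleGraph V) (hb : IsBipartite G)
    (h : ∀ x : V → ℝ, Matrix.mulVec (G.adjMatrix ℝ) x = 0 → x = 0) :
    ∃ M : G.Subgraph, M.IsPerfectMatching := by
  obtain ⟨s, hs⟩ := hb
  have hdet : (G.adjMatrix ℝ).det ≠ 0 := by
    intro hd
    obtain ⟨x, hx0, hx⟩ := Matrix.exists_mulVec_eq_zero_iff.mpr hd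
    exact hx0 (h x hx)
  have hterm : ∃ σ : Equiv.Perm V, ∏ i : V, G.adjMatrix ℝ (σ i) i ≠ 0 := by
    by_contra hcon
    push_neg at hcon
    apply hdet
    rw [Matrix.det_apply]
    exact Finset.sum_eq_zero fun σ _ => by rw [hcon σ, smul_zero]
  obtain ⟨σ, hσ0⟩ := hterm
  have hσ : ∀ i : V, G.Adj (σ i) i := by
    intro i
    have := Finset.prod_ne_zero_iff.mp hσ0 i (Finset.mem_univ i)
    rw [SimpleGraph.adjMatrix_apply] at this
    by_contra hA
    simp [hA] at this
  -- σ maps s to sᶜ and vice versa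
  have hσs : ∀ i : V, σ i ∈ s ↔ i ∉ s := fun i => hs (hσ i)
  refine ⟨⟨Set.univ, fun u v => (u ∈ s ∧ v = σ u) ∨ (v ∈ s ∧ u = σ v),
    ?_, fun _ => trivial, ?_⟩, ?_, fun _ => trivial⟩
  · rintro u v (⟨hu, rfl⟩ | ⟨hv, rfl⟩)
    · exact (hσ u).symm
    · exact hσ v
  · refine ⟨?_⟩
    rintro u v (⟨hu, rfl⟩ | ⟨hv, rfl⟩)
    · exact Or.inr ⟨hu, rfl⟩
    · exact Or.inl ⟨hv, rfl⟩
  · rintro v -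
    by_cases hv : v ∈ s
    · refine ⟨σ v, Or.inl ⟨hv, rfl⟩, ?_⟩
      rintro w (⟨-, rfl⟩ | ⟨hw, rfl⟩)
      · rfl
      · exact absurd hv (by simpa [hw] using (hσs w))
    · refine ⟨σ.symm v, Or.inr ⟨?_, (σ.apply_symm_apply v).symm⟩, ?_⟩
      · by_contra hsv
        have := (hσs (σ.symm v))
        rw [σ.apply_symm_apply] at this
        exact hv (this.mpr hsv)
      · rintro w (⟨hv', -⟩ | ⟨hw, rfl⟩)
        · exact absurd hv' hv
        · exact (σ.symm_apply_apply w).symm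
lemma null_of_pm (G : SimpleGraph V) (hb : IsBipartite G) (hc : C4kFree G)
    (M : G.Subgraph) (hM : M.IsPerfectMatching) {x : V → ℝ}
    (hx : Matrix.mulVec (G.adjMatrix ℝ) x = 0) : x = 0 := by
  by_contra hx0
  obtain ⟨s, hs⟩ := hb
  have hMm := hM.1
  have hMs := hM.2
  -- the matching partner function
  obtain ⟨m, hm_adj, hm_uniq⟩ : ∃ m : V → V, (∀ v, M.Adj v (m v)) ∧
      (∀ v w, M.Adj v w → w = m v) :=
    ⟨fun v => (hMm (hMs v)).choose, fun v => (hMm (hMs v)).choose_spec.1,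
      fun v w h => (hMm (hMs v)).choose_spec.2 w h⟩
  have hm_invol : ∀ v, m (m v) = v := fun v => (hm_uniq (m v) v (hm_adj v).symm).symm
  have hmG : ∀ v, G.Adj v (m v) := fun v => M.adj_sub (hm_adj v)
  have hsum : ∀ v, ∑ u ∈ G.neighborFinset v, x u = 0 := by
    intro v
    have h := congrFun hx v
    rwa [SimpleGraph.adjMatrix_mulVec_apply] at h
  -- the extension step
  have step : ∀ v : {v : V // x v ≠ 0}, ∃ u : {u : V // x u ≠ 0},
      G.Adj (m v.1) u.1 ∧ x u.1 * x v.1 < 0 := by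
    rintro ⟨v, hv⟩
    by_contra hcon
    push_neg at hcon
    have hnn : ∀ u, G.Adj (m v) u → 0 ≤ x u * x v := by
      intro u hu
      rcases eq_or_ne (x u) 0 with h | h
      · rw [h, zero_mul]
      · exact hcon ⟨u, h⟩ hu
    have hpos : 0 < ∑ u ∈ G.neighborFinset (m v), x u * x v := by
      refine Finset.sum_pos' (fun u hu => hnn u ((G.mem_neighborFinset _ _).mp hu)) ?_
      exact ⟨v, (G.mem_neighborFinset _ _).mpr (hmG v).symm, mul_self_pos.mpr hv⟩
    rw [← Finset.sum_mul, hsum, zero_mul] at hpos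
    exact lt_irrefl _ hpos
  obtain ⟨v₀, hv₀⟩ := Function.ne_iff.mp hx0
  have hv₀' : x v₀ ≠ 0 := by simpa using hv₀
  -- the sequence of even-indexed vertices
  obtain ⟨E, hE⟩ : ∃ E : ℕ → {v : V // x v ≠ 0}, ∀ n, E (n+1) = (step (E n)).choose :=
    ⟨fun n => Nat.rec ⟨v₀, hv₀'⟩ (fun _ p => (step p).choose) n, fun _ => rfl⟩
  set e : ℕ → V := fun n => (E n).1 with he_def
  have he0 : ∀ n, x (e n) ≠ 0 := fun n => (E n).2
  have he_adj : ∀ n, G.Adj (m (e n)) (e (n+1)) := by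
    intro n
    show G.Adj (m (E n).1) (E (n+1)).1
    rw [hE n]
    exact (step (E n)).choose_spec.1
  have he_sign : ∀ n, x (e (n+1)) * x (e n) < 0 := by
    intro n
    show x (E (n+1)).1 * x (E n).1 < 0
    rw [hE n]
    exact (step (E n)).choose_spec.2
  -- the full walk sequence
  obtain ⟨g, hge, hgo⟩ : ∃ g : ℕ → V, (∀ k, g (2*k) = e k) ∧ (∀ k, g (2*k+1) = m (e k)) := by
    refine ⟨fun n => if Even n then e (n/2) else m (e (n/2)), fun k => ?_, fun k => ?_⟩
    · show (if Even (2*k) then e (2*k/2) else m (e (2*k/2))) = e k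
      rw [if_pos (even_two_mul k), Nat.mul_div_cancel_left k two_pos]
    · show (if Even (2*k+1) then e ((2*k+1)/2) else m (e ((2*k+1)/2))) = m (e k)
      rw [if_neg (by simp [Nat.even_add_one, even_two_mul]),
        show (2*k+1)/2 = k by omega]
  have hg_adj : ∀ n, G.Adj (g n) (g (n+1)) := by
    intro n
    obtain ⟨k, rfl | rfl⟩ : ∃ k, n = 2*k ∨ n = 2*k+1 := ⟨n/2, by omega⟩
    · rw [hge k, hgo k]; exact hmG (e k)
    · rw [hgo k, show 2*k+1+1 = 2*(k+1) by ring, hge (k+1)]; exact he_adj k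
  -- sign alternation along e
  have hsign : ∀ n, (0 < x (e n)) ↔ (Even n ↔ 0 < x (e 0)) := by
    intro n
    induction n with
    | zero => simp
    | succ n ih =>
      have hlt := he_sign n
      have key : (0 < x (e (n+1))) ↔ ¬ (0 < x (e n)) := by
        rcases mul_neg_iff.mp hlt with ⟨h1, h2⟩ | ⟨h1, h2⟩
        · exact iff_of_true h1 (not_lt.mpr h2.le)
        · exact iff_of_false (not_lt.mpr h1.le) (not_not_intro h2)
      rw [key, ih, Nat.even_add_one]
      tauto
  have hpar : ∀ a b, e a = e b → (Even a ↔ Even b) := by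
    intro a b hab
    have h1 := hsign a
    have h2 := hsign b
    rw [hab] at h1
    tauto
  -- first repeated vertex
  have hex : ∃ n, ∃ i, i < n ∧ g i = g n := by
    obtain ⟨a, b, hne, hab⟩ := Fintype.exists_ne_map_eq_of_card_lt
      (fun k : Fin (Fintype.card V + 1) => g k) (by simp)
    rcases lt_or_gt_of_ne hne with h | h
    · exact ⟨(b : ℕ), (a : ℕ), h, hab⟩
    · exact ⟨(a : ℕ), (b : ℕ), h, hab.symm⟩
  set j := Nat.find hex with hj_def
  obtain ⟨i, hij, hgij⟩ := Nat.find_spec hex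
  have hmin : ∀ q, q < j → ∀ p, p < q → g p ≠ g q := by
    intro q hq p hpq hpq'
    exact Nat.find_min hex hq ⟨p, hpq, hpq'⟩
  have htail : ∀ p q, i < p → p < q → q ≤ j → g p ≠ g q := by
    intro p q hip hpq hqj hpq'
    rcases lt_or_eq_of_le hqj with h | rfl
    · exact hmin q h p hpq hpq'
    · exact hmin p hpq i hip (hgij.trans hpq'.symm)
  -- the closed part has even length (bipartiteness)
  have heven : Even (j - i) := by
    have hw := walk_even_iff hs (mkWalk G g hg_adj i (j - i))
    rw [mkWalk_length, show i + (j - i) = j by omega] at hw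
    exact hw.mpr (by rw [hgij])
  have hparity : Even j ↔ Even i := (Nat.even_sub hij.le).mp heven
  rcases Nat.even_or_odd i with hi | hi
  · -- both endpoints at even positions: get a cycle of length ≡ 0 mod 4
    obtain ⟨a, ha⟩ := hi
    obtain ⟨b, hb⟩ := hparity.mpr ⟨a, ha⟩
    have ha' : i = 2*a := by omega
    have hb' : j = 2*b := by omega
    have heab : e a = e b := by
      have h1 : g i = e a := by rw [ha', hge]
      have h2 : g j = e b := by rw [hb', hge]
      rw [← h1, ← h2, hgij]
    have hab : a < b := by omega
    obtain ⟨c, hcc⟩ : Even (b - a) := (Nat.even_sub hab.le).mpr (hpar a b heab).symm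
    have hne2 : b ≠ a + 1 := by
      intro h
      rw [h] at heab
      have hlt := he_sign a
      rw [← heab] at hlt
      exact absurd hlt (not_lt.mpr (mul_self_nonneg _))
    have hn4 : 4 ≤ j - i := by omega
    have h0 : g (i + (j - i)) = g i := by
      rw [show i + (j - i) = j by omega]; exact hgij.symm
    have F1 : ∀ p q, p < q → q < j - i → g (i + p) ≠ g (i + q) :=
      fun p q hpq hq => hmin (i + q) (by omega) (i + p) (by omega)
    have F2 : ∀ p q, 1 ≤ p → p < q → q ≤ j - i → g (i + p) ≠ g (i + q) :=
      fun p q h1 h2 h3 => htail (i + p) (i + q) (by omega) (by omega) (by omega)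
    have hcyc := mkWalk_isCycle G g hg_adj i (j - i) hn4 h0 F1 F2
    refine hc (g i) _ hcyc ?_
    rw [Walk.length_copy, mkWalk_length]
    omega
  · -- both endpoints at odd positions: contradiction with minimality
    obtain ⟨a, ha⟩ := hi
    have hj : ¬ Even j := by
      intro h; exact (Nat.even_add_one.mp (ha ▸ hparity.mp h : Even (2*a+1))) (even_two_mul a)
    obtain ⟨b, hb⟩ := Nat.odd_iff.mpr (Nat.not_even_iff.mp hj)
    have heab : e a = e b := by
      have h1 : g i = m (e a) := by rw [ha, hgo]
      have h2 : g j = m (e b) := by rw [hb, hgo]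
      have h3 : m (e a) = m (e b) := by rw [← h1, ← h2, hgij]
      have := congrArg m h3
      rwa [hm_invol, hm_invol] at this
    have hab : a < b := by omega
    refine hmin (2*b) (by omega) (2*a) (by omega) ?_
    rw [hge, hge, heab]

/-- a `C_{4k}`-free bipartite graph has a perfect matching iff its
adjacency matrix is nonsingular. -/
theorem stmt8 (G : SimpleGraph V) (hb : IsBipartite G) (hc : C4kFree G) :
    (∃ M : G.Subgraph, M.IsPerfectMatching) ↔ nullSet G = {0} := by
  constructor
  · rintro ⟨M, hM⟩
    refine Set.eq_singleton_iff_unique_mem.mpr ⟨?_, ?_⟩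
    · show Matrix.mulVec (G.adjMatrix ℝ) 0 = 0
      exact Matrix.mulVec_zero _
    · intro x hx
      exact null_of_pm G hb hc M hM hx
  · intro h
    refine pm_of_nonsingular G hb ?_
    intro x hx
    have hmem : x ∈ nullSet G := hx
    rw [h] at hmem
    exact hmem


end C4kPaper
end
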